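/- arXiv:1907.00337 — 3 statements merged into one kernel-verified Lean document; each statement's English description precedes it below -/
import Mathlib

section
/- Let H be a real Hilbert space, k ≥ 1 and m ≥ 1 integers, M an m-dimensional C^k-submanifold of H, and h₀ ∈ M. Let L ⊆ H be a linear subspace with dim L = m such that L ⊆ T_h M for all h ∈ U ∩ M, for some open neighborhood U ⊆ H of h₀. Then M is a local affine space generated by L around h₀, i.e. there exist an open neighborhood U₀ ⊆ H of h₀ and g₀ ∈ L^⊥ such that U₀ ∩ M = U₀ ∩ ({g₀} + L). -/
open Set Pointwise

noncomputable section

/-- `φ : V → U ∩ M` is a parametrization of class `C^k` of `M` around `h₀`: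
`U` is an open neighborhood of `h₀`, `V` is open, `φ ∈ C^k(V;H)`,
`φ : V → U ∩ M` is a homeomorphism, and `Dφ(y)` is injective for all `y ∈ V`. -/
structure IsParametrization {E H : Type*} [NormedAddCommGroup E] [NormedSpace ℝ E]
    [NormedAddCommGroup H] [NormedSpace ℝ H] (k : ℕ) (M : Set H) (h₀ : H)
    (V : Set E) (φ : E → H) (U : Set H) : Prop where
  isOpen_U : IsOpen U
  h₀_mem_U : h₀ ∈ U
  isOpen_V : IsOpen V
  contDiffOn : ContDiffOn ℝ k φ V
  image_eq : φ '' V = U ∩ M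
  injOn : Set.InjOn φ V
  exists_contInv : ∃ ψ : H → E, ContinuousOn ψ (U ∩ M) ∧ ∀ y ∈ V, ψ (φ y) = y
  fderiv_injective : ∀ y ∈ V, Function.Injective (fderiv ℝ φ y)

/-- key lemma: ranges of derivatives of two parametrizations at the same point satisfy
range Dφ₂(y₂) ⊆ range Dφ₁(y₁). -/
theorem param_range_subset {H : Type*} [NormedAddCommGroup H] [InnerProductSpace ℝ H]
    [CompleteSpace H] {k m : ℕ} (hk : 1 ≤ k) {M : Set H} {h : H}
    {V₁ V₂ : Set (EuclideanSpace ℝ (Fin m))} {φ₁ φ₂ : EuclideanSpace ℝ (Fin m) → H}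
    {U₁ U₂ : Set H} (P₁ : IsParametrization k M h V₁ φ₁ U₁)
    (P₂ : IsParametrization k M h V₂ φ₂ U₂) {y₁ y₂ : EuclideanSpace ℝ (Fin m)}
    (hy₁ : y₁ ∈ V₁) (hy₂ : y₂ ∈ V₂) (hφ₁ : φ₁ y₁ = h) (hφ₂ : φ₂ y₂ = h) :
    Set.range (fderiv ℝ φ₂ y₂) ⊆ Set.range (fderiv ℝ φ₁ y₁) := by
  have hk' : ((k : ℕ∞) : WithTop ℕ∞) ≠ 0 := by exact_mod_cast (by omega : k ≠ 0)
  set D₁ := fderiv ℝ φ₁ y₁ with hD₁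
  set R : Submodule ℝ H := LinearMap.range (D₁ : EuclideanSpace ℝ (Fin m) →ₗ[ℝ] H) with hR
  have hinj₁ : Function.Injective D₁ := P₁.fderiv_injective y₁ hy₁
  haveI : FiniteDimensional ℝ R := by
    exact Module.Finite.range D₁.toLinearMap
  haveI : CompleteSpace R := FiniteDimensional.complete ℝ R
  set p := R.orthogonalProjectionOnto with hp
  -- the map g = p ∘ φ₁ has invertible derivative at y₁
  have hc₁ : ContDiffAt ℝ k φ₁ y₁ := P₁.contDiffOn.contDiffAt (P₁.isOpen_V.mem_nhds hy₁)
  have hs₁ : HasStrictFDerivAt φ₁ D₁ y₁ := hc₁.hasStrictFDerivAt hk'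
  set D : EuclideanSpace ℝ (Fin m) →L[ℝ] R := p.comp D₁ with hD
  have hDinj : Function.Injective D := by
    intro v w hvw
    apply hinj₁
    have hv : D₁ v ∈ R := LinearMap.mem_range_self _ v
    have hw : D₁ w ∈ R := LinearMap.mem_range_self _ w
    have hv' : ((p (D₁ v)) : H) = D₁ v := Submodule.starProjection_eq_self_iff.mpr hv
    have hw' : ((p (D₁ w)) : H) = D₁ w := Submodule.starProjection_eq_self_iff.mpr hw
    rw [← hv', ← hw']
    exact congrArg _ hvw
  have hfin : Module.finrank ℝ (EuclideanSpace ℝ (Fin m)) = Module.finrank ℝ R := by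
    have h1 : Module.finrank ℝ (LinearMap.range (D₁ : EuclideanSpace ℝ (Fin m) →ₗ[ℝ] H)) =
        Module.finrank ℝ (EuclideanSpace ℝ (Fin m)) :=
      LinearMap.finrank_range_of_inj hinj₁
    rw [hR]
    exact h1.symm
  have hDbij : Function.Bijective D := by
    refine ⟨hDinj, ?_⟩
    have := (LinearMap.injective_iff_surjective_of_finrank_eq_finrank (f := (D : _ →ₗ[ℝ] _)) hfin).mp hDinj
    exact this
  set e : EuclideanSpace ℝ (Fin m) ≃L[ℝ] R :=
    (LinearEquiv.ofBijective (D : _ →ₗ[ℝ] _) hDbij).toContinuousLinearEquiv with he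
  have hecoe : (e : EuclideanSpace ℝ (Fin m) →L[ℝ] R) = D := by
    ext v; rfl
  have hg : HasStrictFDerivAt (fun y => p (φ₁ y)) (e : _ →L[ℝ] _) y₁ := by
    rw [hecoe]
    exact (p.hasStrictFDerivAt).comp y₁ hs₁
  set α := hg.localInverse _ _ _ with hα
  -- ψ₁ : continuous inverse of φ₁
  obtain ⟨ψ₁, hψc, hψ⟩ := P₁.exists_contInv
  have hhU₁ : h ∈ U₁ ∩ M := by
    rw [← P₁.image_eq] at *
    exact hφ₁ ▸ Set.mem_image_of_mem φ₁ hy₁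
  have hψh : ψ₁ h = y₁ := by rw [← hφ₁]; exact hψ y₁ hy₁
  have hc₂ : ContDiffAt ℝ k φ₂ y₂ := P₂.contDiffOn.contDiffAt (P₂.isOpen_V.mem_nhds hy₂)
  have htφ₂ : Filter.Tendsto φ₂ (nhds y₂) (nhds h) := by
    have := hc₂.continuousAt.tendsto
    rwa [hφ₂] at this
  have hev1 : ∀ᶠ y in nhds y₂, φ₂ y ∈ U₁ ∩ M := by
    have h1 : ∀ᶠ y in nhds y₂, φ₂ y ∈ U₁ := htφ₂ (P₁.isOpen_U.mem_nhds hhU₁.1)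
    have h2 : ∀ᶠ y in nhds y₂, y ∈ V₂ := P₂.isOpen_V.mem_nhds hy₂
    filter_upwards [h1, h2] with y hy hyV
    exact ⟨hy, (P₂.image_eq ▸ Set.mem_image_of_mem φ₂ hyV).2⟩
  have htψ : Filter.Tendsto (fun y => ψ₁ (φ₂ y)) (nhds y₂) (nhds y₁) := by
    have h1 : Filter.Tendsto φ₂ (nhds y₂) (nhdsWithin h (U₁ ∩ M)) :=
      tendsto_nhdsWithin_iff.mpr ⟨htφ₂, hev1⟩
    have h2 : Filter.Tendsto ψ₁ (nhdsWithin h (U₁ ∩ M)) (nhds (ψ₁ h)) := hψc h hhU₁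
    rw [hψh] at h2
    exact h2.comp h1
  have hidφ : ∀ x ∈ U₁ ∩ M, φ₁ (ψ₁ x) = x := by
    intro x hx
    rw [← P₁.image_eq] at hx
    obtain ⟨z, hz, rfl⟩ := hx
    rw [hψ z hz]
  have hevτ : ∀ᶠ y in nhds y₂, α (p (φ₂ y)) = ψ₁ (φ₂ y) := by
    have hli := htψ.eventually hg.eventually_left_inverse
    filter_upwards [hli, hev1] with y hy h1y
    rw [← hy, hidφ _ h1y]
  have hevφ : (fun y => φ₂ y) =ᶠ[nhds y₂] fun y => φ₁ (α (p (φ₂ y))) := by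
    filter_upwards [hevτ, hev1] with y hy h1y
    rw [hy, hidφ _ h1y]
  have hτy₂ : α (p (φ₂ y₂)) = y₁ := by
    have := hevτ.self_of_nhds
    rw [this, hφ₂, hψh]
  -- differentiability of τ = α ∘ p ∘ φ₂ at y₂
  have hαd : DifferentiableAt ℝ α (p (φ₂ y₂)) := by
    have := hg.to_localInverse.differentiableAt
    have hpt : p (φ₁ y₁) = p (φ₂ y₂) := by rw [hφ₁, hφ₂]
    rwa [hpt] at this
  have hφ₂d : DifferentiableAt ℝ φ₂ y₂ := hc₂.differentiableAt hk'
  have hinner : DifferentiableAt ℝ (fun y => p (φ₂ y)) y₂ :=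
    (p.differentiableAt).comp y₂ hφ₂d
  have hτd : DifferentiableAt ℝ (fun y => α (p (φ₂ y))) y₂ := hαd.comp y₂ hinner
  have hφ₁d : DifferentiableAt ℝ φ₁ (α (p (φ₂ y₂))) := by
    rw [hτy₂]; exact hc₁.differentiableAt hk'
  have hfd : fderiv ℝ φ₂ y₂ =
      (fderiv ℝ φ₁ y₁).comp (fderiv ℝ (fun y => α (p (φ₂ y))) y₂) := by
    rw [hevφ.fderiv_eq]
    have := fderiv_comp (𝕜 := ℝ) y₂ hφ₁d hτd
    simp only [Function.comp_def] at this
    rw [this, hτy₂]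
  rw [hfd]
  rintro v ⟨w, rfl⟩
  exact ⟨fderiv ℝ (fun y => α (p (φ₂ y))) y₂ w, rfl⟩


/-- `M` is an `m`-dimensional `C^k`-submanifold of `H`: `M` is nonempty and every
point of `M` admits a parametrization with domain an open subset of `ℝ^m`. -/
def IsSubmanifold {H : Type*} [NormedAddCommGroup H] [NormedSpace ℝ H]
    (k m : ℕ) (M : Set H) : Prop :=
  M.Nonempty ∧ ∀ h₀ ∈ M, ∃ (V : Set (EuclideanSpace ℝ (Fin m)))
    (φ : EuclideanSpace ℝ (Fin m) → H) (U : Set H), IsParametrization k M h₀ V φ U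

/-- The tangent space `T_h M`: the image of `Dφ(φ⁻¹(h))` for a parametrization `φ`
of `M` around `h`. -/
def TangentSet {H : Type*} [NormedAddCommGroup H] [NormedSpace ℝ H]
    (k m : ℕ) (M : Set H) (h : H) : Set H :=
  {v | ∃ (V : Set (EuclideanSpace ℝ (Fin m))) (φ : EuclideanSpace ℝ (Fin m) → H)
    (U : Set H), IsParametrization k M h V φ U ∧
      ∃ y ∈ V, φ y = h ∧ v ∈ Set.range (fderiv ℝ φ y)}

theorem tangentSet_subset {H : Type*} [NormedAddCommGroup H] [InnerProductSpace ℝ H]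
    [CompleteSpace H] {k m : ℕ} (hk : 1 ≤ k) {M : Set H} {h : H}
    {V : Set (EuclideanSpace ℝ (Fin m))} {φ : EuclideanSpace ℝ (Fin m) → H} {U : Set H}
    (P : IsParametrization k M h V φ U) {y : EuclideanSpace ℝ (Fin m)}
    (hy : y ∈ V) (hφ : φ y = h) :
    TangentSet k m M h ⊆ Set.range (fderiv ℝ φ y) := by
  rintro v ⟨V₂, φ₂, U₂, P₂, y₂, hy₂, hφ₂, hv⟩
  exact param_range_subset hk P P₂ hy hy₂ hφ hφ₂ hv


/-- `M` has flatness at least `d` at `h₀`: some `d`-dimensional subspace `L ⊆ H` is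
contained in all tangent spaces `T_h M` for `h ∈ U ∩ M`, `U` an open neighborhood of `h₀`. -/
def FlatAt {H : Type*} [NormedAddCommGroup H] [NormedSpace ℝ H]
    (k m : ℕ) (M : Set H) (h₀ : H) (d : ℕ) : Prop :=
  ∃ (L : Submodule ℝ H) (U : Set H), Module.finrank ℝ L = d ∧ IsOpen U ∧ h₀ ∈ U ∧
    ∀ h ∈ U ∩ M, (L : Set H) ⊆ TangentSet k m M h

/-- The flatness `fl M(h₀)` of `M` at `h₀`: the largest `d ∈ {0,…,m}` such that `M` has
flatness at least `d` at `h₀`. -/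
def flatnessAt {H : Type*} [NormedAddCommGroup H] [NormedSpace ℝ H]
    (k m : ℕ) (M : Set H) (h₀ : H) : ℕ :=
  sSup {d | d ≤ m ∧ FlatAt k m M h₀ d}

/-- The flatness `fl M` of `M`: the minimum of `fl M(h)` over `h ∈ M`. -/
def flatness {H : Type*} [NormedAddCommGroup H] [NormedSpace ℝ H]
    (k m : ℕ) (M : Set H) : ℕ :=
  sInf (flatnessAt k m M '' M)

/-- if `dim L = m` and `L ⊆ T_h M` for all `h ∈ U ∩ M`, then `M` is a
local affine space generated by `L` around `h₀`. -/
theorem stmt11 {H : Type*} [NormedAddCommGroup H] [InnerProductSpace ℝ H] [CompleteSpace H]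
    (k m : ℕ) (hk : 1 ≤ k) (hm : 1 ≤ m) (M : Set H) (hM : IsSubmanifold k m M)
    (h₀ : H) (h₀M : h₀ ∈ M)
    (L : Submodule ℝ H) [FiniteDimensional ℝ L] (hdim : Module.finrank ℝ L = m)
    (U : Set H) (hU : IsOpen U) (h₀U : h₀ ∈ U)
    (htang : ∀ h ∈ U ∩ M, (L : Set H) ⊆ TangentSet k m M h) :
    ∃ U₀ : Set H, IsOpen U₀ ∧ h₀ ∈ U₀ ∧ ∃ g₀ ∈ Lᗮ,
      U₀ ∩ M = U₀ ∩ (({g₀} : Set H) + (L : Set H)) := by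
  classical
  have hk' : ((k : ℕ∞) : WithTop ℕ∞) ≠ 0 := by exact_mod_cast (by omega : k ≠ 0)
  haveI : CompleteSpace L := FiniteDimensional.complete ℝ L
  obtain ⟨V, φ, U', P⟩ := hM.2 h₀ h₀M
  have h₀U'M : h₀ ∈ U' ∩ M := ⟨P.h₀_mem_U, h₀M⟩
  obtain ⟨y₀, hy₀, hφy₀⟩ : ∃ y₀ ∈ V, φ y₀ = h₀ := by
    have : h₀ ∈ φ '' V := P.image_eq ▸ h₀U'M
    obtain ⟨y₀, hy₀, hφ⟩ := this
    exact ⟨y₀, hy₀, hφ⟩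
  obtain ⟨ψ, hψc, hψ⟩ := P.exists_contInv
  -- W : open set of parameters where the tangent condition applies
  set W : Set (EuclideanSpace ℝ (Fin m)) := V ∩ φ ⁻¹' U with hW
  have hWopen : IsOpen W := P.contDiffOn.continuousOn.isOpen_inter_preimage P.isOpen_V hU
  have hy₀W : y₀ ∈ W := ⟨hy₀, by simp [hφy₀, h₀U]⟩
  -- at every parameter in W, the range of the derivative is exactly L
  have hrange : ∀ y ∈ W, LinearMap.range (fderiv ℝ φ y : EuclideanSpace ℝ (Fin m) →ₗ[ℝ] H) = L := by
    intro y hy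
    have hyV : y ∈ V := hy.1
    have hmem : φ y ∈ U' ∩ M := P.image_eq ▸ Set.mem_image_of_mem φ hyV
    have P' : IsParametrization k M (φ y) V φ U' :=
      { P with h₀_mem_U := hmem.1 }
    have hLsub : (L : Set H) ⊆ Set.range (fderiv ℝ φ y) := by
      intro v hv
      exact tangentSet_subset hk P' hyV rfl (htang (φ y) ⟨hy.2, hmem.2⟩ hv)
    have hle : L ≤ LinearMap.range (fderiv ℝ φ y : EuclideanSpace ℝ (Fin m) →ₗ[ℝ] H) := by
      intro v hv
      exact hLsub hv
    haveI : FiniteDimensional ℝ (LinearMap.range (fderiv ℝ φ y : EuclideanSpace ℝ (Fin m) →ₗ[ℝ] H)) :=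
      Module.Finite.range (fderiv ℝ φ y).toLinearMap
    have hfr : Module.finrank ℝ (LinearMap.range (fderiv ℝ φ y : EuclideanSpace ℝ (Fin m) →ₗ[ℝ] H)) ≤
        Module.finrank ℝ L := by
      have h1 : Module.finrank ℝ (LinearMap.range
          ((fderiv ℝ φ y : EuclideanSpace ℝ (Fin m) →L[ℝ] H) :
            EuclideanSpace ℝ (Fin m) →ₗ[ℝ] H)) =
          Module.finrank ℝ (EuclideanSpace ℝ (Fin m)) :=
        LinearMap.finrank_range_of_inj (P.fderiv_injective y hyV)
      have h2 : Module.finrank ℝ (LinearMap.range (fderiv ℝ φ y : EuclideanSpace ℝ (Fin m) →ₗ[ℝ] H)) = m :=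
        h1.trans finrank_euclideanSpace_fin
      rw [h2, hdim]
    exact (Submodule.eq_of_le_of_finrank_le hle hfr).symm
  -- projection onto Lᗮ as a map H → H
  set Q : H →L[ℝ] H := (Submodule.orthogonal L).subtypeL.comp (Submodule.orthogonal L).orthogonalProjectionOnto with hQ
  have hQzero : ∀ y ∈ W, fderiv ℝ (fun z => Q (φ z)) y = 0 := by
    intro y hy
    have hdφ : DifferentiableAt ℝ φ y :=
      (P.contDiffOn.contDiffAt (P.isOpen_V.mem_nhds hy.1)).differentiableAt hk'
    have : fderiv ℝ (fun z => Q (φ z)) y = Q.comp (fderiv ℝ φ y) :=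
      (Q.hasFDerivAt.comp y hdφ.hasFDerivAt).fderiv
    rw [this]
    ext v
    have hmemL : fderiv ℝ φ y v ∈ L := by
      rw [← hrange y hy]
      exact LinearMap.mem_range_self _ v
    simp only [ContinuousLinearMap.comp_apply, ContinuousLinearMap.zero_apply, hQ,
      Submodule.subtypeL_apply]
    rw [Submodule.orthogonalProjectionOnto_orthogonal_apply_eq_zero hmemL]
    simp
  -- a convex ball around y₀ inside W
  obtain ⟨r, hr, hball⟩ := Metric.isOpen_iff.mp hWopen y₀ hy₀W
  set B := Metric.ball y₀ r with hB
  have hBW : B ⊆ W := hball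
  have hBopen : IsOpen B := Metric.isOpen_ball
  have hy₀B : y₀ ∈ B := Metric.mem_ball_self hr
  -- Q ∘ φ is constant on B
  have hconst : ∀ y ∈ B, Q (φ y) = Q h₀ := by
    intro y hy
    have hdiff : DifferentiableOn ℝ (fun z => Q (φ z)) B := by
      intro z hz
      have hdφ : DifferentiableAt ℝ φ z :=
        (P.contDiffOn.contDiffAt (P.isOpen_V.mem_nhds (hBW hz).1)).differentiableAt hk'
      exact (Q.differentiableAt.comp z hdφ).differentiableWithinAt
    have := (convex_ball y₀ r).is_const_of_fderivWithin_eq_zero (𝕜 := ℝ) hdiff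
      (fun z hz => by
        rw [fderivWithin_of_isOpen hBopen hz]
        exact hQzero z (hBW hz)) hy hy₀B
    rw [this, hφy₀]
  set g₀ : H := Q h₀ with hg₀
  have hg₀mem : g₀ ∈ Lᗮ := by
    simp only [hg₀, hQ, ContinuousLinearMap.comp_apply, Submodule.subtypeL_apply]
    exact Submodule.coe_mem _
  -- each φ y for y ∈ B lies in {g₀} + L
  have hdecomp : ∀ x : H, x = (L.orthogonalProjectionOnto x : H) + Q x := by
    intro x
    simp only [hQ, ContinuousLinearMap.comp_apply, Submodule.subtypeL_apply]
    exact (L.starProjection_add_starProjection_orthogonal x).symm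
  have hφB : ∀ y ∈ B, φ y = g₀ + (L.orthogonalProjectionOnto (φ y) : H) := by
    intro y hy
    have h1 := hdecomp (φ y)
    rw [hconst y hy] at h1
    rw [add_comm]
    exact h1
  have hφmem : ∀ y ∈ B, φ y ∈ ({g₀} : Set H) + (L : Set H) := by
    intro y hy
    rw [hφB y hy]
    exact Set.add_mem_add rfl (Submodule.coe_mem _)
  -- inverse function theorem for f = P_L ∘ φ
  set f : EuclideanSpace ℝ (Fin m) → L := fun y => L.orthogonalProjectionOnto (φ y) with hf
  set Dφ₀ := fderiv ℝ φ y₀ with hDφ₀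
  have hinj₀ : Function.Injective Dφ₀ := P.fderiv_injective y₀ hy₀
  set D : EuclideanSpace ℝ (Fin m) →L[ℝ] L := (L.orthogonalProjectionOnto).comp Dφ₀ with hD
  have hDinj : Function.Injective D := by
    intro v w hvw
    apply hinj₀
    have hv : Dφ₀ v ∈ L := by
      rw [← hrange y₀ hy₀W]; exact LinearMap.mem_range_self _ v
    have hw : Dφ₀ w ∈ L := by
      rw [← hrange y₀ hy₀W]; exact LinearMap.mem_range_self _ w
    have hv' : ((L.orthogonalProjectionOnto (Dφ₀ v)) : H) = Dφ₀ v := Submodule.starProjection_eq_self_iff.mpr hv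
    have hw' : ((L.orthogonalProjectionOnto (Dφ₀ w)) : H) = Dφ₀ w := Submodule.starProjection_eq_self_iff.mpr hw
    rw [← hv', ← hw']
    exact congrArg _ hvw
  have hfin2 : Module.finrank ℝ (EuclideanSpace ℝ (Fin m)) = Module.finrank ℝ L := by
    rw [finrank_euclideanSpace_fin, hdim]
  have hDbij : Function.Bijective D :=
    ⟨hDinj, (LinearMap.injective_iff_surjective_of_finrank_eq_finrank
      (f := (D : _ →ₗ[ℝ] L)) hfin2).mp hDinj⟩
  set e : EuclideanSpace ℝ (Fin m) ≃L[ℝ] L :=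
    (LinearEquiv.ofBijective (D : _ →ₗ[ℝ] _) hDbij).toContinuousLinearEquiv with he
  have hecoe : (e : EuclideanSpace ℝ (Fin m) →L[ℝ] L) = D := by ext v; rfl
  have hs₀ : HasStrictFDerivAt φ Dφ₀ y₀ :=
    (P.contDiffOn.contDiffAt (P.isOpen_V.mem_nhds hy₀)).hasStrictFDerivAt hk'
  have hgs : HasStrictFDerivAt f (e : _ →L[ℝ] _) y₀ := by
    rw [hecoe]
    exact (L.orthogonalProjectionOnto).hasStrictFDerivAt.comp y₀ hs₀
  have hmap : Filter.map f (nhds y₀) = nhds (f y₀) := hgs.map_nhds_eq_of_equiv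
  have hfB : f '' B ∈ nhds (f y₀) := by
    rw [← hmap]
    exact Filter.image_mem_map (hBopen.mem_nhds hy₀B)
  obtain ⟨ε, hε, hεsub⟩ := Metric.mem_nhds_iff.mp hfB
  -- neighborhood O coming from continuity of the inverse ψ
  have hψh₀ : ψ h₀ = y₀ := by rw [← hφy₀]; exact hψ y₀ hy₀
  have hBnhd : ψ ⁻¹' B ∈ nhdsWithin h₀ (U' ∩ M) := by
    have h2 : Filter.Tendsto ψ (nhdsWithin h₀ (U' ∩ M)) (nhds (ψ h₀)) := hψc h₀ h₀U'M
    rw [hψh₀] at h2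
    exact h2 (hBopen.mem_nhds hy₀B)
  obtain ⟨O, hOopen, h₀O, hOsub⟩ := mem_nhdsWithin.mp hBnhd
  refine ⟨U' ∩ U ∩ O ∩ Metric.ball h₀ ε, ?_, ?_, g₀, hg₀mem, ?_⟩
  · exact ((P.isOpen_U.inter hU).inter hOopen).inter Metric.isOpen_ball
  · exact ⟨⟨⟨P.h₀_mem_U, h₀U⟩, h₀O⟩, Metric.mem_ball_self hε⟩
  · apply Set.Subset.antisymm
    · rintro x ⟨hxU₀, hxM⟩
      refine ⟨hxU₀, ?_⟩
      have hxU'M : x ∈ U' ∩ M := ⟨hxU₀.1.1.1, hxM⟩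
      obtain ⟨z, hz, rfl⟩ : ∃ z ∈ V, φ z = x := by
        have hx : x ∈ φ '' V := P.image_eq ▸ hxU'M
        obtain ⟨z, hz1, hz2⟩ := hx
        exact ⟨z, hz1, hz2⟩
      have hzB : z ∈ B := by
        have hm' : ψ (φ z) ∈ B := hOsub ⟨hxU₀.1.2, hxU'M⟩
        rwa [hψ z hz] at hm'
      exact hφmem _ hzB
    · rintro x ⟨hxU₀, hxgL⟩
      refine ⟨hxU₀, ?_⟩
      obtain ⟨g, hg, l, hl, rfl⟩ := Set.mem_add.mp hxgL
      rw [Set.mem_singleton_iff] at hg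
      subst hg
      have hfy₀ : (f y₀ : H) = (L.orthogonalProjectionOnto h₀ : H) := by
        rw [hf]; simp [hφy₀]
      have hh₀ : h₀ = g₀ + (f y₀ : H) := by
        rw [hfy₀]
        have h1 := hdecomp h₀
        rw [← hg₀] at h1
        rw [add_comm]
        exact h1
      set lL : L := ⟨l, hl⟩ with hlL
      have hdist : dist lL (f y₀) < ε := by
        rw [Subtype.dist_eq]
        have h2 : dist (g₀ + l) (g₀ + (f y₀ : H)) < ε := by
          rw [← hh₀]
          exact Metric.mem_ball.mp hxU₀.2
        rwa [dist_add_left] at h2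
      obtain ⟨z, hzB, hfz⟩ := hεsub (Metric.mem_ball.mpr hdist)
      have hφz : φ z = g₀ + l := by
        rw [hφB z hzB]
        congr 1
        exact congrArg _ hfz
      rw [← hφz]
      have hm : φ z ∈ φ '' V := Set.mem_image_of_mem φ (hBW hzB).1
      rw [P.image_eq] at hm
      exact hm.2
end
end

section
/- Let H be a real Hilbert space, k ≥ 1 and m ≥ 2 integers, M an m-dimensional C^k-submanifold of H, and h₀ ∈ M. Let L ⊆ H be a linear subspace with dim L = m − 1 such that L ⊆ T_h M for all h ∈ U ∩ M, for some open neighborhood U ⊆ H of h₀. Then M is a local foliation generated by L around h₀, i.e. there exist an open neighborhood U₀ ⊆ H of h₀ and a one-dimensional C^k-submanifold N of L^⊥ such that U₀ ∩ M = U₀ ∩ (N + L). -/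
open Set Pointwise

noncomputable section

/-- Derivative of a map into a closed submodule lies in the submodule. -/
lemma fderiv_apply_mem_of_mapsTo {E H : Type*} [NormedAddCommGroup E] [NormedSpace ℝ E]
    [NormedAddCommGroup H] [NormedSpace ℝ H]
    {f : E → H} {S : Submodule ℝ H} (hS : IsClosed (S : Set H))
    {s : Set E} (hs : IsOpen s) (hmem : ∀ x ∈ s, f x ∈ S) {t : E} (ht : t ∈ s)
    (hd : DifferentiableAt ℝ f t) (v : E) : fderiv ℝ f t v ∈ S := by
  set g : ℝ → H := fun u => f (t + u • v) with hg
  have hline : HasDerivAt (fun u : ℝ => t + u • v) v 0 := by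
    simpa using ((hasDerivAt_id (0:ℝ)).smul_const v).const_add t
  have hgd : HasDerivAt g (fderiv ℝ f t v) 0 := by
    have hd' : HasFDerivAt f (fderiv ℝ f t) ((fun u : ℝ => t + u • v) 0) := by
      simpa using hd.hasFDerivAt
    have := hd'.comp_hasDerivAt (0:ℝ) hline
    exact this
  have hslope := hasDerivAt_iff_tendsto_slope.1 hgd
  have hev : ∀ᶠ u in nhdsWithin (0:ℝ) {(0:ℝ)}ᶜ, slope g 0 u ∈ S := by
    have hmem0 : ∀ᶠ u in nhds (0:ℝ), t + u • v ∈ s := by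
      have hc : Continuous (fun u : ℝ => t + u • v) :=
        continuous_const.add (continuous_id.smul continuous_const)
      have : (fun u : ℝ => t + u • v) 0 ∈ s := by simpa using ht
      exact hc.continuousAt.eventually_mem (hs.mem_nhds this)
    filter_upwards [nhdsWithin_le_nhds hmem0] with u hu
    have h1 : g u ∈ S := hmem _ hu
    have h0 : g 0 ∈ S := hmem _ (by simpa using ht)
    simpa [slope_def_module] using S.smul_mem u⁻¹ (S.sub_mem h1 h0)
  exact hS.mem_of_tendsto hslope hev

/-- A function with vanishing directional derivative in direction `v` on an open convex set
is constant along `v`. -/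
lemma const_along_of_fderiv_zero {E F : Type*} [NormedAddCommGroup E] [NormedSpace ℝ E]
    [NormedAddCommGroup F] [NormedSpace ℝ F]
    {f : E → F} {s : Set E} (hconv : Convex ℝ s)
    (hd : ∀ x ∈ s, DifferentiableAt ℝ f x) {v : E}
    (hv : ∀ x ∈ s, fderiv ℝ f x v = 0) {a : E} (ha : a ∈ s) (hav : a + v ∈ s) :
    f (a + v) = f a := by
  set g : ℝ → F := fun u => f (a + u • v) with hg
  set J : Set ℝ := {u | a + u • v ∈ s} with hJ
  have hJconv : Convex ℝ J := by
    intro u₁ h₁ u₂ h₂ p q hp hq hpq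
    have key : p • (a + u₁ • v) + q • (a + u₂ • v) = a + (p * u₁ + q * u₂) • v := by
      have : p • (a + u₁ • v) + q • (a + u₂ • v) = (p + q) • a + (p * u₁ + q * u₂) • v := by
        simp [smul_add, smul_smul, add_smul]; abel
      rw [this, hpq, one_smul]
    show a + (p • u₁ + q • u₂) • v ∈ s
    simpa [smul_eq_mul, ← key] using hconv h₁ h₂ hp hq hpq
  have hgd : ∀ u ∈ J, HasFDerivWithinAt g (0 : ℝ →L[ℝ] F) J u := by
    intro u hu
    have hline : HasDerivAt (fun u : ℝ => a + u • v) v u := by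
      simpa using ((hasDerivAt_id u).smul_const v).const_add a
    have hgd' : HasDerivAt g (fderiv ℝ f (a + u • v) v) u := by
      have := (hd _ hu).hasFDerivAt.comp_hasDerivAt u hline
      exact this
    rw [hv _ hu] at hgd'
    have h0' : ContinuousLinearMap.smulRight (1 : ℝ →L[ℝ] ℝ) (0:F) = (0 : ℝ →L[ℝ] F) := by
      ext x; simp
    have : HasFDerivAt g (0 : ℝ →L[ℝ] F) u := by
      have := hgd'.hasFDerivAt
      rwa [ContinuousLinearMap.toSpanSingleton_zero] at this
    exact this.hasFDerivWithinAt
  have h0 : (0:ℝ) ∈ J := by simpa [hJ] using ha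
  have h1 : (1:ℝ) ∈ J := by simpa [hJ] using hav
  have := hJconv.norm_image_sub_le_of_norm_hasFDerivWithin_le (C := 0) hgd
    (fun x _ => by simp) h0 h1
  have h10 : ‖g 1 - g 0‖ ≤ 0 := by simpa using this
  have : g 1 = g 0 := sub_eq_zero.1 (norm_le_zero_iff.1 h10)
  simpa [hg] using this

lemma aux_le_of_sq {a b c : ℝ} (h : a ^ 2 + b ^ 2 = c ^ 2) (ha : 0 ≤ a) (hc : 0 ≤ c) :
    a ≤ c := by nlinarith

lemma aux_sq_lt {a b r ρ x : ℝ} (hr : 0 < r) (ha : 0 ≤ a) (haρ : a < ρ) (hρ : ρ ≤ r / 4)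
    (hb0 : 0 ≤ b) (hb : b < r / 2) (hx : 0 ≤ x) (hsq : x ^ 2 = a ^ 2 + b ^ 2) : x < r := by
  nlinarith
set_option maxHeartbeats 1600000

/-- if `dim L = m - 1` and `L ⊆ T_h M` for all `h ∈ U ∩ M`, then `M` is
a local foliation generated by `L` around `h₀`. -/
theorem stmt12 {H : Type*} [NormedAddCommGroup H] [InnerProductSpace ℝ H] [CompleteSpace H]
    (k m : ℕ) (hk : 1 ≤ k) (hm : 2 ≤ m) (M : Set H) (hM : IsSubmanifold k m M)
    (h₀ : H) (h₀M : h₀ ∈ M)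
    (L : Submodule ℝ H) [FiniteDimensional ℝ L] (hdim : Module.finrank ℝ L = m - 1)
    (U : Set H) (hU : IsOpen U) (h₀U : h₀ ∈ U)
    (htang : ∀ h ∈ U ∩ M, (L : Set H) ⊆ TangentSet k m M h) :
    ∃ U₀ : Set H, IsOpen U₀ ∧ h₀ ∈ U₀ ∧ ∃ N : Set Lᗮ, IsSubmanifold k 1 N ∧
      U₀ ∩ M = U₀ ∩ ((Subtype.val '' N : Set H) + (L : Set H)) := by
  classical
  obtain ⟨V, φ, U₁, hP⟩ := hM.2 h₀ h₀M
  have h₀UM : h₀ ∈ U₁ ∩ M := ⟨hP.h₀_mem_U, h₀M⟩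
  obtain ⟨y₀, hy₀V, hy₀⟩ : ∃ y ∈ V, φ y = h₀ := by
    rw [← hP.image_eq] at h₀UM
    obtain ⟨y, hy, hyeq⟩ := h₀UM
    exact ⟨y, hy, hyeq⟩
  have hk1 : (k : WithTop ℕ∞) ≠ 0 := by exact_mod_cast (show k ≠ 0 by omega)
  have hφdiff : ∀ y ∈ V, DifferentiableAt ℝ φ y := fun y hy =>
    ((hP.contDiffOn y hy).contDiffAt (hP.isOpen_V.mem_nhds hy)).differentiableAt hk1
  set D : EuclideanSpace ℝ (Fin m) →L[ℝ] H := fderiv ℝ φ y₀ with hDdef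
  set T : Submodule ℝ H := LinearMap.range D.toLinearMap with hTdef
  have hDinj : Function.Injective D := hP.fderiv_injective y₀ hy₀V
  haveI hTfd : FiniteDimensional ℝ T := by
    have : T = LinearMap.range (D.toLinearMap) := rfl
    rw [this]
    infer_instance
  have hTfin : Module.finrank ℝ T = m := by
    have := LinearMap.finrank_range_of_inj (f := D.toLinearMap) hDinj
    rw [show LinearMap.range D.toLinearMap = T from rfl] at this
    simpa using this
  haveI : CompleteSpace T := FiniteDimensional.complete ℝ T
  set P : H →L[ℝ] T := T.orthogonalProjectionOnto with hPdef
  set ψ : EuclideanSpace ℝ (Fin m) → T := fun y => P (φ y) with hψdef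
  set t₀ : T := ψ y₀ with ht₀def
  -- the derivative of ψ at y₀ as a continuous linear equiv
  have hBinj : Function.Injective (P.comp D) := by
    intro v v' hvv'
    have hv : D v ∈ T := LinearMap.mem_range.2 ⟨v, rfl⟩
    have hv' : D v' ∈ T := LinearMap.mem_range.2 ⟨v', rfl⟩
    apply hDinj
    have h1 : ((P (D v) : T) : H) = D v := Submodule.starProjection_eq_self_iff.2 hv
    have h2 : ((P (D v') : T) : H) = D v' := Submodule.starProjection_eq_self_iff.2 hv'
    rw [← h1, ← h2]
    exact congrArg Subtype.val hvv'
  set A : EuclideanSpace ℝ (Fin m) ≃L[ℝ] T :=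
    ((P.comp D).toLinearMap.linearEquivOfInjective hBinj
      (by rw [finrank_euclideanSpace_fin, hTfin])).toContinuousLinearEquiv with hAdef
  have hAeq : (A : EuclideanSpace ℝ (Fin m) →L[ℝ] T) = P.comp D := by
    ext v
    have : A v = (P.comp D) v := by
      rw [hAdef, LinearEquiv.coe_toContinuousLinearEquiv']
      rfl
    exact congrArg Subtype.val this
  have hψc : ContDiffAt ℝ k ψ y₀ := by
    exact P.contDiff.contDiffAt.comp y₀
      ((hP.contDiffOn y₀ hy₀V).contDiffAt (hP.isOpen_V.mem_nhds hy₀V))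
  have hψd : HasFDerivAt ψ (A : EuclideanSpace ℝ (Fin m) →L[ℝ] T) y₀ := by
    rw [hAeq]
    exact P.hasFDerivAt.comp y₀ (hφdiff y₀ hy₀V).hasFDerivAt
  set σ : T → EuclideanSpace ℝ (Fin m) := hψc.localInverse hψd hk1 with hσdef
  have hσ0 : σ t₀ = y₀ := hψc.localInverse_apply_image hψd hk1
  have hσcd : ContDiffAt ℝ k σ t₀ := hψc.to_localInverse hψd hk1
  have hstrict : HasStrictFDerivAt ψ (A : EuclideanSpace ℝ (Fin m) →L[ℝ] T) y₀ :=
    hψc.hasStrictFDerivAt' hψd hk1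
  have hright : ∀ᶠ t in nhds t₀, ψ (σ t) = t := hstrict.eventually_right_inverse
  have hleft : ∀ᶠ y in nhds y₀, σ (ψ y) = y := hstrict.eventually_left_inverse
  -- a ball around t₀ on which σ is C^k, a right inverse of ψ, with values in V
  obtain ⟨Ω, hΩnhds, hσΩ⟩ : ∃ u ∈ nhds t₀, ContDiffOn ℝ k σ u :=
    hσcd.contDiffOn le_rfl (by simp)
  have hσV : ∀ᶠ t in nhds t₀, σ t ∈ V := by
    have hc : ContinuousAt σ t₀ := hσcd.continuousAt
    have : V ∈ nhds (σ t₀) := by rw [hσ0]; exact hP.isOpen_V.mem_nhds hy₀V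
    exact hc.eventually_mem this
  obtain ⟨r₀, hr₀pos, hball₀⟩ : ∃ r₀ > 0, ∀ t ∈ Metric.ball t₀ r₀,
      (ψ (σ t) = t ∧ σ t ∈ V) ∧ t ∈ Ω := by
    have hev : ∀ᶠ t in nhds t₀, (ψ (σ t) = t ∧ σ t ∈ V) ∧ t ∈ Ω :=
      (hright.and hσV).and hΩnhds
    exact Metric.eventually_nhds_iff_ball.1 hev
  -- the local graph map
  set γ : T → H := fun t => φ (σ t) with hγdef
  set G : T → H := fun t => γ t - (t : H) with hGdef
  have hγM : ∀ t ∈ Metric.ball t₀ r₀, γ t ∈ U₁ ∩ M := by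
    intro t ht
    rw [← hP.image_eq]
    exact ⟨σ t, ((hball₀ t ht).1.2), rfl⟩
  have hPγ : ∀ t ∈ Metric.ball t₀ r₀, P (γ t) = t := fun t ht => (hball₀ t ht).1.1
  have hγcd : ContDiffOn ℝ k γ (Metric.ball t₀ r₀) := by
    apply hP.contDiffOn.comp ((hσΩ.mono (fun t ht => (hball₀ t ht).2)))
    exact fun t ht => (hball₀ t ht).1.2
  have hγdiff : ∀ t ∈ Metric.ball t₀ r₀, DifferentiableAt ℝ γ t := fun t ht =>
    ((hγcd t ht).contDiffAt (Metric.isOpen_ball.mem_nhds ht)).differentiableAt hk1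
  have hGdiff : ∀ t ∈ Metric.ball t₀ r₀, DifferentiableAt ℝ G t := fun t ht =>
    (hγdiff t ht).sub (T.subtypeL.differentiableAt)
  have hGperp : ∀ t ∈ Metric.ball t₀ r₀, G t ∈ Tᗮ := by
    intro t ht
    have : G t = γ t - (P (γ t) : H) := by rw [hPγ t ht]
    rw [this]
    exact Submodule.sub_starProjection_mem_orthogonal _
  have hγt₀ : γ t₀ = h₀ := by rw [hγdef]; simp only [hσ0, hy₀]
  -- the graph lemma: near h₀, M coincides with the graph of γ
  obtain ⟨Ψ, hΨc, hΨl⟩ := hP.exists_contInv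
  have hΨh₀ : Ψ h₀ = y₀ := by rw [← hy₀]; exact hΨl y₀ hy₀V
  obtain ⟨ε₁, hε₁pos, hε₁sub, hgraph⟩ : ∃ ε₁ > 0, Metric.ball h₀ ε₁ ⊆ U ∩ U₁ ∧
      ∀ x ∈ M, x ∈ Metric.ball h₀ ε₁ → P x ∈ Metric.ball t₀ r₀ ∧ γ (P x) = x := by
    have hSnhds : {y | y ∈ V ∧ σ (ψ y) = y ∧ ψ y ∈ Metric.ball t₀ r₀} ∈ nhds y₀ := by
      have h1 : ∀ᶠ y in nhds y₀, y ∈ V := hP.isOpen_V.mem_nhds hy₀V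
      have h3 : ∀ᶠ y in nhds y₀, ψ y ∈ Metric.ball t₀ r₀ := by
        have hψcont : ContinuousAt ψ y₀ := hψd.differentiableAt.continuousAt
        exact hψcont.eventually_mem (Metric.isOpen_ball.mem_nhds (Metric.mem_ball_self hr₀pos))
      exact (h1.and (hleft.and h3))
    have hcw : ContinuousWithinAt Ψ (U₁ ∩ M) h₀ := hΨc h₀ h₀UM
    have hpre : Ψ ⁻¹' {y | y ∈ V ∧ σ (ψ y) = y ∧ ψ y ∈ Metric.ball t₀ r₀} ∈
        nhdsWithin h₀ (U₁ ∩ M) := hcw (by rw [hΨh₀]; exact hSnhds)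
    obtain ⟨O, hOopen, hOmem, hOsub⟩ := mem_nhdsWithin.1 hpre
    obtain ⟨ε₁, hε₁pos, hball⟩ := Metric.isOpen_iff.1 (hOopen.inter (hU.inter hP.isOpen_U)) h₀
      ⟨hOmem, h₀U, hP.h₀_mem_U⟩
    refine ⟨ε₁, hε₁pos, fun x hx => (hball hx).2, ?_⟩
    intro x hxM hxball
    have hxO : x ∈ O := (hball hxball).1
    have hxU₁M : x ∈ U₁ ∩ M := ⟨(hball hxball).2.2, hxM⟩
    obtain ⟨y, hyV, hyx⟩ : ∃ y ∈ V, φ y = x := by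
      have := hxU₁M; rw [← hP.image_eq] at this
      obtain ⟨y, hy, hyeq⟩ := this; exact ⟨y, hy, hyeq⟩
    have hyS : y ∈ {y | y ∈ V ∧ σ (ψ y) = y ∧ ψ y ∈ Metric.ball t₀ r₀} := by
      have hx' : x ∈ Ψ ⁻¹' {y | y ∈ V ∧ σ (ψ y) = y ∧ ψ y ∈ Metric.ball t₀ r₀} :=
        hOsub ⟨hxO, hxU₁M⟩
      have : Ψ x ∈ {y | y ∈ V ∧ σ (ψ y) = y ∧ ψ y ∈ Metric.ball t₀ r₀} := hx'
      rwa [← hyx, hΨl y hyV] at this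
    have hPx : P x = ψ y := by rw [← hyx]
    constructor
    · rw [hPx]; exact hyS.2.2
    · rw [hPx]
      show φ (σ (ψ y)) = x
      rw [hyS.2.1, hyx]
  -- choose a smaller radius r so that γ maps ball t₀ r into ball h₀ ε₁
  obtain ⟨r, hrpos, hrr₀, hγball⟩ : ∃ r > 0, r ≤ r₀ ∧
      ∀ t ∈ Metric.ball t₀ r, γ t ∈ Metric.ball h₀ ε₁ := by
    have hγcont : ContinuousAt γ t₀ := (hγdiff t₀ (by simpa using hr₀pos)).continuousAt
    have : ∀ᶠ t in nhds t₀, γ t ∈ Metric.ball h₀ ε₁ :=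
      hγcont.eventually_mem (Metric.isOpen_ball.mem_nhds (by rw [hγt₀]; simpa using hε₁pos))
    obtain ⟨r₁, hr₁pos, hr₁⟩ := Metric.eventually_nhds_iff_ball.1 this
    refine ⟨min r₁ r₀, lt_min hr₁pos hr₀pos, min_le_right _ _, fun t ht => ?_⟩
    exact hr₁ t (Metric.ball_subset_ball (min_le_left _ _) ht)
  have hballr : Metric.ball t₀ r ⊆ Metric.ball t₀ r₀ := Metric.ball_subset_ball hrr₀
  -- key: for t in the small ball and ℓ ∈ L, the derivative of γ reproduces ℓ
  have hBkey : ∀ t ∈ Metric.ball t₀ r, ∀ ℓ : H, ℓ ∈ L → ℓ = fderiv ℝ γ t (P ℓ) := by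
    intro t ht ℓ hℓ
    have hγtM : γ t ∈ U ∩ M := by
      refine ⟨(hε₁sub (hγball t ht)).1, (hγM t (hballr ht)).2⟩
    obtain ⟨V', φ', U'', hP', y', hy'V', hφ'y', hv⟩ := htang (γ t) hγtM (show ℓ ∈ (L : Set H) from hℓ)
    obtain ⟨e, he⟩ := hv
    have hφ'd : DifferentiableAt ℝ φ' y' :=
      ((hP'.contDiffOn y' hy'V').contDiffAt (hP'.isOpen_V.mem_nhds hy'V')).differentiableAt hk1
    set c : ℝ → H := fun s => φ' (y' + s • e) with hcdef
    have hc0 : c 0 = γ t := by simp [hcdef, hφ'y']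
    have hline : ∀ u : ℝ, HasDerivAt (fun s : ℝ => y' + s • e) e u := by
      intro u
      simpa using ((hasDerivAt_id u).smul_const e).const_add y'
    have hcd : HasDerivAt c ℓ 0 := by
      have hφ'at : HasFDerivAt φ' (fderiv ℝ φ' y') ((fun s : ℝ => y' + s • e) 0) := by
        simpa using hφ'd.hasFDerivAt
      have := hφ'at.comp_hasDerivAt (0:ℝ) (hline 0)
      rw [he] at this
      exact this
    -- eventually c s lies in M and in the graph zone
    have hev : ∀ᶠ s in nhds (0:ℝ), c s = γ (P (c s)) ∧ P (c s) ∈ Metric.ball t₀ r₀ := by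
      have hcM : ∀ᶠ s in nhds (0:ℝ), c s ∈ M := by
        have : ∀ᶠ s in nhds (0:ℝ), y' + s • e ∈ V' := by
          have hlc : ContinuousAt (fun s : ℝ => y' + s • e) 0 := (hline 0).continuousAt
          exact hlc.eventually_mem (hP'.isOpen_V.mem_nhds (by simpa using hy'V'))
        filter_upwards [this] with s hs
        have : φ' (y' + s • e) ∈ φ' '' V' := ⟨_, hs, rfl⟩
        rw [hP'.image_eq] at this
        exact this.2
      have hcball : ∀ᶠ s in nhds (0:ℝ), c s ∈ Metric.ball h₀ ε₁ := by
        have hccont : ContinuousAt c 0 := hcd.continuousAt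
        refine hccont.eventually_mem (Metric.isOpen_ball.mem_nhds ?_)
        rw [hc0]; exact hγball t ht
      filter_upwards [hcM, hcball] with s hsM hsb
      have := hgraph (c s) hsM hsb
      exact ⟨(this.2).symm, this.1⟩
    set τ : ℝ → T := fun s => P (c s) with hτdef
    have hτd : HasDerivAt τ (P ℓ) 0 := P.hasFDerivAt.comp_hasDerivAt 0 hcd
    have hτ0 : τ 0 = t := by rw [hτdef]; simp only [hc0]; exact hPγ t (hballr ht)
    have hγat : HasFDerivAt γ (fderiv ℝ γ t) (τ 0) := by
      rw [hτ0]; exact (hγdiff t (hballr ht)).hasFDerivAt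
    have hcomp : HasDerivAt (fun s => γ (τ s)) (fderiv ℝ γ t (P ℓ)) 0 :=
      hγat.comp_hasDerivAt 0 hτd
    have hceq : (fun s => γ (τ s)) =ᶠ[nhds (0:ℝ)] c := by
      filter_upwards [hev] with s hs using hs.1.symm
    have hcd' : HasDerivAt c (fderiv ℝ γ t (P ℓ)) 0 := by
      exact hcomp.congr_of_eventuallyEq hceq.symm
    exact hcd.unique hcd'
  -- L is contained in T
  have hLT : L ≤ T := by
    intro ℓ hℓ
    have hkey := hBkey t₀ (by simpa using hrpos) ℓ hℓ
    have hσd : DifferentiableAt ℝ σ t₀ := hσcd.differentiableAt hk1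
    have hφat : DifferentiableAt ℝ φ (σ t₀) := by rw [hσ0]; exact hφdiff y₀ hy₀V
    have hchain : fderiv ℝ γ t₀ = (fderiv ℝ φ (σ t₀)).comp (fderiv ℝ σ t₀) := by
      exact fderiv_comp t₀ hφat hσd
    rw [hkey, hchain]
    have : fderiv ℝ φ (σ t₀) = D := by rw [hσ0]
    rw [this]
    exact LinearMap.mem_range.2 ⟨fderiv ℝ σ t₀ (P ℓ), rfl⟩
  -- derivative of G kills L-directions
  have hPmem : ∀ x : H, x ∈ T → ((P x : T) : H) = x := fun x hx =>
    Submodule.starProjection_eq_self_iff.2 hx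
  have hGkey : ∀ t ∈ Metric.ball t₀ r, ∀ ℓ : H, ℓ ∈ L → fderiv ℝ G t (P ℓ) = 0 := by
    intro t ht ℓ hℓ
    have hsub : HasFDerivAt G ((fderiv ℝ γ t) - T.subtypeL) t :=
      ((hγdiff t (hballr ht)).hasFDerivAt).sub T.subtypeL.hasFDerivAt
    rw [hsub.fderiv]
    have : ((fderiv ℝ γ t) - T.subtypeL) (P ℓ) = fderiv ℝ γ t (P ℓ) - ((P ℓ : T) : H) := rfl
    rw [this, ← hBkey t ht ℓ hℓ, hPmem ℓ (hLT hℓ)]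
    exact sub_self ℓ
  -- a unit vector w spanning the orthogonal complement of L inside T
  set W : Submodule ℝ H := Lᗮ ⊓ T with hWdef
  have hWrank : Module.finrank ℝ W = 1 := by
    have h2 := Submodule.finrank_add_inf_finrank_orthogonal (K₁ := L) (K₂ := T) hLT
    rw [hdim, hTfin] at h2
    show Module.finrank ℝ (Lᗮ ⊓ T : Submodule ℝ H) = 1
    omega
  obtain ⟨w, hwW, hw1⟩ : ∃ w : H, w ∈ W ∧ ‖w‖ = 1 := by
    have : W ≠ ⊥ := by
      intro hbot
      rw [hbot] at hWrank
      simp at hWrank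
    obtain ⟨w₀, hw₀W, hw₀ne⟩ := Submodule.exists_mem_ne_zero_of_ne_bot this
    refine ⟨‖w₀‖⁻¹ • w₀, W.smul_mem _ hw₀W, ?_⟩
    rw [norm_smul, norm_inv, norm_norm, inv_mul_cancel₀ (norm_ne_zero_iff.2 hw₀ne)]
  have hwperpL : w ∈ Lᗮ := hwW.1
  have hwT : w ∈ T := hwW.2
  have hwne : w ≠ 0 := by intro h; rw [h, norm_zero] at hw1; exact one_ne_zero hw1.symm
  -- T = L ⊔ span w
  have hWspan : W = Submodule.span ℝ {w} := by
    symm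
    apply Submodule.eq_of_le_of_finrank_eq
    · rw [Submodule.span_le, Set.singleton_subset_iff]; exact hwW
    · rw [finrank_span_singleton hwne, hWrank]
  have hsup : L ⊔ W = T := by
    apply Submodule.eq_of_le_of_finrank_eq (sup_le hLT inf_le_right)
    have hdisj : L ⊓ W = ⊥ := by
      apply le_bot_iff.1
      calc L ⊓ W ≤ L ⊓ Lᗮ := inf_le_inf_left L inf_le_left
        _ = ⊥ := L.inf_orthogonal_eq_bot
    have h3 := Submodule.finrank_sup_add_finrank_inf_eq L W
    rw [hdisj, finrank_bot, add_zero, hdim, hWrank] at h3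
    rw [hTfin]
    have h4 : Module.finrank ℝ (L ⊔ W : Submodule ℝ H) =
        Module.finrank ℝ (L ⊔ Lᗮ ⊓ T : Submodule ℝ H) := rfl
    rw [h4] at h3
    omega
  have hdecomp : ∀ x : H, x ∈ T → ∃ l ∈ L, ∃ s : ℝ, x = l + s • w := by
    intro x hx
    rw [← hsup] at hx
    obtain ⟨l, hl, w', hw', hlw⟩ := Submodule.mem_sup.1 hx
    rw [hWspan] at hw'
    obtain ⟨s, hs⟩ := Submodule.mem_span_singleton.1 hw'
    exact ⟨l, hl, s, by rw [← hlw, ← hs]⟩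
  -- Pythagoras for L ⟂ w decompositions
  have hperp : ∀ l : H, l ∈ L → ∀ z : H, z ∈ Lᗮ → ‖l + z‖ ^ 2 = ‖l‖ ^ 2 + ‖z‖ ^ 2 := by
    intro l hl z hz
    rw [norm_add_sq_real, hz l hl, mul_zero, add_zero]
  -- set up the curve ν and its projection to Lᗮ
  set wT : T := ⟨w, hwT⟩ with hwTdef
  set δ : ℝ := r / 2 with hδdef
  set ρ : ℝ := min ε₁ (r / 4) with hρdef
  have hδpos : 0 < δ := by positivity
  have hρpos : 0 < ρ := lt_min hε₁pos (by positivity)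
  have hρε₁ : ρ ≤ ε₁ := min_le_left _ _
  have hρr4 : ρ ≤ r / 4 := min_le_right _ _
  set ν : ℝ → H := fun s => γ (t₀ + s • wT) with hνdef
  set pL : H := ((L.orthogonalProjectionOnto ((t₀ : T) : H) : L) : H) with hpLdef
  set νL : ℝ → Lᗮ := fun s => Lᗮ.orthogonalProjectionOnto (ν s) with hνLdef
  set N : Set Lᗮ := νL '' Set.Ioo (-δ) δ with hNdef
  set U₀ : Set H := Metric.ball h₀ ρ with hU₀def
  have hwTnorm : ‖wT‖ = 1 := hw1
  have haff : ∀ s : ℝ, |s| < r → (t₀ + s • wT) ∈ Metric.ball t₀ r := by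
    intro s hs
    rw [Metric.mem_ball, dist_eq_norm, add_sub_cancel_left, norm_smul, hwTnorm, mul_one]
    exact hs
  have hγG : ∀ t : T, γ t = (t : H) + G t := by
    intro t; rw [hGdef]; simp
  have hGL : ∀ t ∈ Metric.ball t₀ r₀, G t ∈ Lᗮ := fun t ht =>
    (Submodule.orthogonal_le hLT) (hGperp t ht)
  have hcoeadd : ∀ (s : ℝ) (x : T), (((x + s • wT) : T) : H) = (x : H) + s • w := by
    intro s x; push_cast; rfl
  have hνs : ∀ s : ℝ, ν s = ((t₀ : T) : H) + s • w + G (t₀ + s • wT) := by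
    intro s
    rw [hνdef]
    show γ (t₀ + s • wT) = _
    rw [hγG (t₀ + s • wT), hcoeadd s t₀]
  have hPl : ∀ l : H, ∀ hl : l ∈ L, P l = (⟨l, hLT hl⟩ : T) :=
    fun l hl => Subtype.ext (hPmem l (hLT hl))
  -- G is constant in L-directions within the ball
  have hGconst : ∀ a : T, a ∈ Metric.ball t₀ r → ∀ l : H, ∀ hl : l ∈ L,
      a + (⟨l, hLT hl⟩ : T) ∈ Metric.ball t₀ r → G (a + ⟨l, hLT hl⟩) = G a := by
    intro a ha l hl hal
    refine const_along_of_fderiv_zero (convex_ball t₀ r) (fun x hx => hGdiff x (hballr hx))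
      ?_ ha hal
    intro x hx
    rw [← hPl l hl]
    exact hGkey x hx l hl
  have hLperpmem : ∀ s : ℝ, |s| < r → s • w + G (t₀ + s • wT) ∈ Lᗮ := by
    intro s hs
    exact Lᗮ.add_mem (Lᗮ.smul_mem s hwperpL) (hGL _ (hballr (haff s hs)))
  have hνLval : ∀ s : ℝ, |s| < r → ((νL s : Lᗮ) : H) = ν s - pL := by
    intro s hs
    have hdecν := Submodule.starProjection_add_starProjection_orthogonal (K := L) (ν s)
    have hPLν : ((L.orthogonalProjectionOnto (ν s) : L) : H) = pL := by
      have : ν s = ((t₀ : T) : H) + (s • w + G (t₀ + s • wT)) := by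
        rw [hνs s, add_assoc]
      rw [this, map_add, Submodule.orthogonalProjectionOnto_apply_of_mem_orthogonal
        (hLperpmem s hs)]
      push_cast
      rw [add_zero]
    have : ((νL s : Lᗮ) : H) = ν s - ((L.orthogonalProjectionOnto (ν s) : L) : H) := by
      rw [hνLdef]
      show ((Lᗮ.orthogonalProjectionOnto (ν s) : Lᗮ) : H) = _
      rw [eq_sub_iff_add_eq, add_comm]
      exact hdecν
    rw [this, hPLν]
  have hpLmem : pL ∈ L := by rw [hpLdef]; exact Subtype.coe_prop _
  refine ⟨U₀, Metric.isOpen_ball, Metric.mem_ball_self hρpos, N, ?_, ?_⟩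
  · -- N is a one-dimensional C^k submanifold of Lᗮ
    have hδr : δ < r := by rw [hδdef]; linarith [hrpos]
    set Sr : Set ℝ := Metric.ball (0:ℝ) r with hSrdef
    have hmemSr : ∀ s : ℝ, |s| < r → s ∈ Sr := by
      intro s hs; rw [hSrdef, Metric.mem_ball, Real.dist_eq, sub_zero]; exact hs
    have hSrmem : ∀ s : ℝ, s ∈ Sr → |s| < r := by
      intro s hs; rw [hSrdef, Metric.mem_ball, Real.dist_eq, sub_zero] at hs; exact hs
    have hδIoo : Set.Ioo (-δ) δ ⊆ Sr := by
      intro s hs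
      exact hmemSr s (lt_trans (abs_lt.2 ⟨hs.1, hs.2⟩) hδr)
    have haffcd : ContDiff ℝ (k : WithTop ℕ∞) (fun s : ℝ => t₀ + s • wT) :=
      contDiff_const.add (contDiff_id.smul contDiff_const)
    have hνcd : ContDiffOn ℝ k ν Sr := by
      apply hγcd.comp (haffcd.contDiffOn)
      intro s hs
      exact hballr (haff s (hSrmem s hs))
    have hνLcd : ContDiffOn ℝ k νL Sr :=
      (Lᗮ.orthogonalProjectionOnto).contDiff.comp_contDiffOn hνcd
    have hre : ∀ s : ℝ, |s| < r →
        (inner ℝ (((νL s : Lᗮ)) : H) w : ℝ) = inner ℝ (((t₀ : T)) : H) w + s := by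
      intro s hs
      rw [hνLval s hs, hνs s]
      have h1 : (inner ℝ pL w : ℝ) = 0 := hwperpL pL hpLmem
      have h2 : (inner ℝ (G (t₀ + s • wT)) w : ℝ) = 0 := by
        rw [real_inner_comm]
        exact (hGperp _ (hballr (haff s hs))) w hwT
      have h3 : (inner ℝ w w : ℝ) = 1 := by
        rw [real_inner_self_eq_norm_sq, hw1, one_pow]
      rw [inner_sub_left, inner_add_left, inner_add_left, real_inner_smul_left, h1, h2, h3]
      ring
    set e0 : EuclideanSpace ℝ (Fin 1) →L[ℝ] ℝ := EuclideanSpace.proj 0 with he0def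
    set e1 : EuclideanSpace ℝ (Fin 1) := EuclideanSpace.single 0 1 with he1def
    have hx0 : ∀ x : EuclideanSpace ℝ (Fin 1), (e0 x) • e1 = x := by
      intro x
      ext i
      have hi : i = 0 := Subsingleton.elim i 0
      subst hi
      simp [he1def, he0def, EuclideanSpace.single_apply, PiLp.smul_apply, smul_eq_mul]
    have he0e1 : ∀ s : ℝ, e0 (s • e1) = s := by
      intro s
      rw [map_smul]
      simp [he0def, he1def, EuclideanSpace.single_apply, smul_eq_mul]
    have hderiv : ∀ s : ℝ, |s| < r →
        ∃ d : Lᗮ, HasDerivAt νL d s ∧ (inner ℝ ((d : Lᗮ) : H) w : ℝ) = 1 := by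
      intro s hs
      have hmem := hmemSr s hs
      have hdiff : DifferentiableAt ℝ νL s :=
        ((hνLcd s hmem).contDiffAt (Metric.isOpen_ball.mem_nhds hmem)).differentiableAt hk1
      refine ⟨deriv νL s, hdiff.hasDerivAt, ?_⟩
      set J : Lᗮ →L[ℝ] ℝ := (innerSL ℝ w).comp Lᗮ.subtypeL with hJdef
      have hJ : ∀ z : Lᗮ, J z = (inner ℝ ((z : Lᗮ) : H) w : ℝ) := by
        intro z
        rw [hJdef]
        simp only [ContinuousLinearMap.coe_comp', Function.comp_apply,
          Submodule.coe_subtypeL', Submodule.coe_subtype, innerSL_apply_apply]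
        exact real_inner_comm _ _
      have hf1 : HasDerivAt (fun u => J (νL u)) (J (deriv νL s)) s :=
        J.hasFDerivAt.comp_hasDerivAt s hdiff.hasDerivAt
      have hev : (fun u => J (νL u)) =ᶠ[nhds s]
          (fun u => (inner ℝ (((t₀ : T)) : H) w : ℝ) + u) := by
        filter_upwards [Metric.isOpen_ball.mem_nhds hmem] with u hu
        rw [hJ, hre u (hSrmem u hu)]
      have hf2 : HasDerivAt (fun u => J (νL u)) 1 s := by
        have hid : HasDerivAt (fun u : ℝ => (inner ℝ (((t₀ : T)) : H) w : ℝ) + u) 1 s := by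
          simpa using (hasDerivAt_id s).const_add (inner ℝ (((t₀ : T)) : H) w : ℝ)
        exact hid.congr_of_eventuallyEq hev
      have huniq := hf1.unique hf2
      rw [← hJ (deriv νL s)]
      exact huniq
    constructor
    · exact ⟨νL 0, ⟨0, ⟨neg_lt_zero.2 hδpos, hδpos⟩, rfl⟩⟩
    · intro n hn
      refine ⟨e0 ⁻¹' Set.Ioo (-δ) δ, fun x => νL (e0 x), Set.univ, ?_⟩
      have habs : ∀ x : EuclideanSpace ℝ (Fin 1), x ∈ e0 ⁻¹' Set.Ioo (-δ) δ → |e0 x| < r := by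
        intro x hx
        exact lt_trans (abs_lt.2 ⟨hx.1, hx.2⟩) hδr
      refine { isOpen_U := isOpen_univ, h₀_mem_U := trivial,
               isOpen_V := isOpen_Ioo.preimage e0.continuous,
               contDiffOn := ?_, image_eq := ?_, injOn := ?_,
               exists_contInv := ?_, fderiv_injective := ?_ }
      · exact hνLcd.comp (e0.contDiff.contDiffOn) (fun x hx => hδIoo hx)
      · rw [Set.univ_inter, hNdef]
        apply subset_antisymm
        · rintro z ⟨x, hx, rfl⟩
          exact ⟨e0 x, hx, rfl⟩
        · rintro z ⟨s, hs, rfl⟩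
          refine ⟨s • e1, ?_, ?_⟩
          · show e0 (s • e1) ∈ Set.Ioo (-δ) δ
            rw [he0e1]
            exact hs
          · show νL (e0 (s • e1)) = νL s
            rw [he0e1]
      · intro x hx x' hx' heq
        have hinner := congrArg (fun z : Lᗮ => (inner ℝ ((z : Lᗮ) : H) w : ℝ)) heq
        simp only at hinner
        rw [hre (e0 x) (habs x hx), hre (e0 x') (habs x' hx')] at hinner
        have he : e0 x = e0 x' := by linarith
        rw [← hx0 x, ← hx0 x', he]
      · refine ⟨fun z => ((inner ℝ ((z : Lᗮ) : H) w : ℝ) - (inner ℝ (((t₀ : T)) : H) w : ℝ)) • e1,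
          ?_, ?_⟩
        · apply Continuous.continuousOn
          exact (((continuous_subtype_val : Continuous (fun z : Lᗮ => (z : H))).inner continuous_const).sub
              (continuous_const : Continuous (fun _ : Lᗮ => (inner ℝ (((t₀ : T)) : H) w : ℝ)))).smul
            continuous_const
        · intro x hx
          show ((inner ℝ ((νL (e0 x) : Lᗮ) : H) w : ℝ) - (inner ℝ (((t₀ : T)) : H) w : ℝ)) • e1 = x
          rw [hre (e0 x) (habs x hx)]
          rw [add_sub_cancel_left]
          exact hx0 x
      · intro x hx
        obtain ⟨d, hd, hdw⟩ := hderiv (e0 x) (habs x hx)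
        have hdne : d ≠ 0 := by
          intro h0
          rw [h0] at hdw
          simp at hdw
        have hF : HasFDerivAt (fun x => νL (e0 x))
            (((1 : ℝ →L[ℝ] ℝ).smulRight d).comp e0) x :=
          (hasDerivAt_iff_hasFDerivAt.1 hd).comp x e0.hasFDerivAt
        rw [hF.fderiv]
        intro v v' hvv
        have happ : ∀ u : EuclideanSpace ℝ (Fin 1),
            (((1 : ℝ →L[ℝ] ℝ).smulRight d).comp e0) u = (e0 u) • d := by
          intro u; simp
        rw [happ v, happ v'] at hvv
        have : (e0 v - e0 v') • d = 0 := by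
          rw [sub_smul, hvv, sub_self]
        rcases smul_eq_zero.1 this with h | h
        · have he : e0 v = e0 v' := by linarith [sub_eq_zero.1 h]
          rw [← hx0 v, ← hx0 v', he]
        · exact absurd h hdne
  · -- the set equality
    have ht₀Ph₀ : t₀ = P h₀ := by
      show ψ y₀ = P h₀
      rw [hψdef]
      simp only [hy₀]
    ext x
    simp only [Set.mem_inter_iff]
    constructor
    · rintro ⟨hxU₀, hxM⟩
      refine ⟨hxU₀, ?_⟩
      have hxnorm : ‖x - h₀‖ < ρ := by
        rw [← dist_eq_norm]; exact hxU₀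
      have hxε : x ∈ Metric.ball h₀ ε₁ := Metric.ball_subset_ball hρε₁ hxU₀
      obtain ⟨hPxball, hγPx⟩ := hgraph x hxM hxε
      set t : T := P x with htdef
      have htnorm : ‖((t : T) : H) - ((t₀ : T) : H)‖ < ρ := by
        have h1 : ((t : T) : H) - ((t₀ : T) : H) = ((P (x - h₀) : T) : H) := by
          rw [htdef, ht₀Ph₀, map_sub]
          push_cast
          rfl
        rw [h1]
        calc ‖((P (x - h₀) : T) : H)‖ = ‖(P (x - h₀) : T)‖ := (Submodule.coe_norm _).symm
          _ ≤ ‖P‖ * ‖x - h₀‖ := P.le_opNorm _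
          _ ≤ 1 * ‖x - h₀‖ := by
              apply mul_le_mul_of_nonneg_right _ (norm_nonneg _)
              exact Submodule.orthogonalProjectionOnto_norm_le T
          _ < ρ := by rw [one_mul]; exact hxnorm
      obtain ⟨l, hl, s, hls⟩ := hdecomp (((t : T) : H) - ((t₀ : T) : H))
        (T.sub_mem (Subtype.coe_prop t) (Subtype.coe_prop t₀))
      have hsq : ‖l‖ ^ 2 + |s| ^ 2 = ‖((t : T) : H) - ((t₀ : T) : H)‖ ^ 2 := by
        rw [hls, hperp l hl (s • w) (Lᗮ.smul_mem s hwperpL), norm_smul, hw1, mul_one]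
        simp [sq_abs]
      have hsq' : |s| ^ 2 + ‖l‖ ^ 2 = ‖((t : T) : H) - ((t₀ : T) : H)‖ ^ 2 := by
        rw [← hsq]; ring
      have hlnorm : ‖l‖ < ρ :=
        lt_of_le_of_lt (aux_le_of_sq hsq (norm_nonneg l) (norm_nonneg _)) htnorm
      have hsnorm : |s| < ρ :=
        lt_of_le_of_lt (aux_le_of_sq hsq' (abs_nonneg s) (norm_nonneg _)) htnorm
      have hsδ : |s| < δ := lt_of_lt_of_le hsnorm (by rw [hδdef]; linarith [hρr4, hrpos])
      have hsr : |s| < r := lt_of_lt_of_le hsδ (by rw [hδdef]; linarith [hrpos])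
      have hteq : t = (t₀ + s • wT) + (⟨l, hLT hl⟩ : T) := by
        apply Subtype.ext
        push_cast
        have h5 := sub_eq_iff_eq_add.1 hls
        rw [h5]
        abel
      have haball : t₀ + s • wT ∈ Metric.ball t₀ r := haff s hsr
      have htball : (t₀ + s • wT) + (⟨l, hLT hl⟩ : T) ∈ Metric.ball t₀ r := by
        rw [← hteq, Metric.mem_ball, dist_eq_norm]
        rw [Submodule.coe_norm]
        push_cast
        exact lt_of_lt_of_le htnorm (le_trans hρr4 (by linarith [hrpos]))
      have hGt : G t = G (t₀ + s • wT) := by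
        rw [hteq]
        exact hGconst (t₀ + s • wT) haball l hl htball
      have hxeq : x = ν s + l := by
        rw [← hγPx]
        rw [hγG t, hGt, hνs s]
        have h5 := sub_eq_iff_eq_add.1 hls
        rw [h5]
        abel
      rw [Set.mem_add]
      refine ⟨ν s - pL, ?_, l + pL, L.add_mem hl hpLmem, by rw [hxeq]; abel⟩
      rw [← hνLval s hsr]
      exact ⟨νL s, ⟨s, abs_lt.1 hsδ |> fun h => ⟨h.1, h.2⟩, rfl⟩, rfl⟩
    · rintro ⟨hxU₀, hxadd⟩
      refine ⟨hxU₀, ?_⟩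
      rw [Set.mem_add] at hxadd
      obtain ⟨a, ha, b, hb, hab⟩ := hxadd
      obtain ⟨n, hn, hna⟩ := ha
      obtain ⟨s, hsIoo, hns⟩ := hn
      have hsδ : |s| < δ := abs_lt.2 ⟨hsIoo.1, hsIoo.2⟩
      have hsr : |s| < r := lt_trans hsδ (by rw [hδdef]; linarith [hrpos])
      have haval : a = ν s - pL := by rw [← hna, ← hns, hνLval s hsr]
      set l : H := b - pL with hldef
      have hlL : l ∈ L := L.sub_mem hb hpLmem
      have hxeq : x = ν s + l := by rw [← hab, haval, hldef]; abel
      have hh₀eq : h₀ = ((t₀ : T) : H) + G t₀ := by rw [← hγt₀, hγG t₀]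
      have ht₀ball : t₀ ∈ Metric.ball t₀ r₀ := by simpa using hr₀pos
      have hz : s • w + (G (t₀ + s • wT) - G t₀) ∈ Lᗮ := by
        refine Lᗮ.add_mem (Lᗮ.smul_mem s hwperpL) (Lᗮ.sub_mem ?_ ?_)
        · exact hGL _ (hballr (haff s hsr))
        · exact hGL t₀ ht₀ball
      have hxh₀ : x - h₀ = l + (s • w + (G (t₀ + s • wT) - G t₀)) := by
        rw [hxeq, hh₀eq, hνs s]
        abel
      have hxnorm : ‖x - h₀‖ < ρ := by rw [← dist_eq_norm]; exact hxU₀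
      have hlnorm : ‖l‖ < ρ := by
        have hpyth := hperp l hlL _ hz
        rw [← hxh₀] at hpyth
        exact lt_of_le_of_lt (aux_le_of_sq hpyth.symm (norm_nonneg l) (norm_nonneg _)) hxnorm
      set t' : T := (t₀ + s • wT) + (⟨l, hLT hlL⟩ : T) with ht'def
      have ht'ball : t' ∈ Metric.ball t₀ r := by
        rw [Metric.mem_ball, dist_eq_norm, ht'def]
        rw [Submodule.coe_norm]
        push_cast
        have heq : ((t₀ : T) : H) + s • w + l - ((t₀ : T) : H) = l + s • w := by abel
        rw [heq]
        have hpyth := hperp l hlL (s • w) (Lᗮ.smul_mem s hwperpL)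
        rw [norm_smul, hw1, mul_one] at hpyth
        have hsδ' : |s| < r / 2 := by rw [hδdef] at hsδ; exact hsδ
        exact aux_sq_lt hrpos (norm_nonneg l) hlnorm hρr4 (abs_nonneg s) hsδ'
          (norm_nonneg (l + s • w)) hpyth
      have hGt' : G t' = G (t₀ + s • wT) := by
        rw [ht'def]
        exact hGconst (t₀ + s • wT) (haff s hsr) l hlL ht'ball
      have hγt' : γ t' = x := by
        rw [hγG t', hGt', hxeq, hνs s]
        have hval : ((t' : T) : H) = ((t₀ : T) : H) + s • w + l := by
          rw [ht'def]; push_cast; abel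
        rw [hval]
        abel
      rw [← hγt']
      exact (hγM t' (hballr ht'ball)).2
end
end

section
/- Let H be a real Hilbert space, k ≥ 1 and m ≥ 1 integers, M an m-dimensional C^k-submanifold of H, h₀ ∈ M, and L ⊆ H a linear subspace with dim L = p ≤ m such that L ⊆ T_h M for all h ∈ U ∩ M, for some open neighborhood U ⊆ H of h₀. Then there exist open sets V₁ ⊆ ℝ^{m−p} and V₂ ⊆ ℝ^p, a map φ₁ ∈ C^k(V₁; L^⊥), and a linear isomorphism T : ℝ^p → L, such that the map φ : V₁ × V₂ → H, φ(y₁, y₂) := φ₁(y₁) + T y₂, is a parametrization of M around h₀. -/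
open Set Pointwise

noncomputable section

set_option maxHeartbeats 4000000 in
/-- existence of a split parametrization `φ(y₁,y₂) = φ₁(y₁) + T y₂`
of `M` around `h₀`, adapted to a subspace `L` of dimension `p` contained in the
tangent spaces near `h₀` (with `ℝ^{m-p} × ℝ^p` identified with `ℝ^m`). -/
theorem stmt14 {H : Type*} [NormedAddCommGroup H] [InnerProductSpace ℝ H] [CompleteSpace H]
    (k m p : ℕ) (hk : 1 ≤ k) (hm : 1 ≤ m) (hpm : p ≤ m)
    (M : Set H) (hM : IsSubmanifold k m M) (h₀ : H) (h₀M : h₀ ∈ M)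
    (L : Submodule ℝ H) [FiniteDimensional ℝ L] (hdim : Module.finrank ℝ L = p)
    (U : Set H) (hU : IsOpen U) (h₀U : h₀ ∈ U)
    (htang : ∀ h ∈ U ∩ M, (L : Set H) ⊆ TangentSet k m M h) :
    ∃ (V₁ : Set (EuclideanSpace ℝ (Fin (m - p)))) (V₂ : Set (EuclideanSpace ℝ (Fin p)))
      (φ₁ : EuclideanSpace ℝ (Fin (m - p)) → Lᗮ) (T : EuclideanSpace ℝ (Fin p) ≃ₗ[ℝ] L)
      (U' : Set H),
      IsOpen V₁ ∧ IsOpen V₂ ∧ ContDiffOn ℝ k φ₁ V₁ ∧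
      IsParametrization k M h₀ (V₁ ×ˢ V₂)
        (fun y => ((φ₁ y.1 : H) + (T y.2 : H))) U' := by
  classical
  obtain ⟨-, hpar⟩ := hM
  obtain ⟨V, φ, U₁, hP⟩ := hpar h₀ h₀M
  have hkn : (k : WithTop ℕ∞) ≠ 0 := by exact_mod_cast (show k ≠ 0 by omega)
  obtain ⟨y₀, hy₀V, hφy₀⟩ : ∃ y₀ ∈ V, φ y₀ = h₀ := by
    have : h₀ ∈ φ '' V := by rw [hP.image_eq]; exact ⟨hP.h₀_mem_U, h₀M⟩
    obtain ⟨y₀, hy₀, h⟩ := this; exact ⟨y₀, hy₀, h⟩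
  have hφCD : ∀ y ∈ V, ContDiffAt ℝ k φ y := fun y hy =>
    hP.contDiffOn.contDiffAt (hP.isOpen_V.mem_nhds hy)
  have hφdiff : ∀ y ∈ V, DifferentiableAt ℝ φ y := fun y hy =>
    (hφCD y hy).differentiableAt hkn
  set Dφ₀ : EuclideanSpace ℝ (Fin m) →L[ℝ] H := fderiv ℝ φ y₀ with hDφ₀def
  have hDφ₀inj : Function.Injective Dφ₀ := hP.fderiv_injective y₀ hy₀V
  set T : Submodule ℝ H := LinearMap.range (Dφ₀ : EuclideanSpace ℝ (Fin m) →ₗ[ℝ] H)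
    with hTdef
  haveI : FiniteDimensional ℝ T := by
    exact Module.Finite.range _
  have hTm : Module.finrank ℝ T = m := by
    rw [hTdef, LinearMap.finrank_range_of_inj hDφ₀inj, finrank_euclideanSpace_fin]
  -- identification of T with ℝ^m and the "chart" map χ
  set E_T : T ≃ₗᵢ[ℝ] EuclideanSpace ℝ (Fin m) :=
    ((stdOrthonormalBasis ℝ T).reindex (finCongr hTm)).repr with hETdef
  set χ : H →L[ℝ] EuclideanSpace ℝ (Fin m) :=
    (E_T.toLinearIsometry.toContinuousLinearMap).comp (Submodule.orthogonalProjectionOnto T) with hχdef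
  have hχT : ∀ (x : H) (hx : x ∈ T), χ x = E_T ⟨x, hx⟩ := by
    intro x hx
    have h1 : (Submodule.orthogonalProjectionOnto T) x = ⟨x, hx⟩ :=
      Submodule.orthogonalProjectionOnto_mem_subspace_eq_self (⟨x, hx⟩ : T)
    simp only [hχdef, ContinuousLinearMap.comp_apply, h1]
    rfl
  have hχnorm : ∀ x : H, ‖χ x‖ ≤ ‖x‖ := by
    intro x
    simp only [hχdef, ContinuousLinearMap.comp_apply]
    rw [show E_T.toLinearIsometry.toContinuousLinearMap ((Submodule.orthogonalProjectionOnto T) x)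
      = E_T ((Submodule.orthogonalProjectionOnto T) x) from rfl, E_T.norm_map]
    simpa using (Submodule.orthogonalProjectionOnto T).le_of_opNorm_le (Submodule.orthogonalProjectionOnto_norm_le T) x
  have hχinjT : ∀ x ∈ T, χ x = 0 → x = 0 := by
    intro x hx h
    rw [hχT x hx] at h
    have : (⟨x, hx⟩ : T) = 0 := E_T.injective (by simpa using h)
    simpa using congrArg (Subtype.val) this
  -- the map f = χ ∘ φ and its invertible derivative at y₀
  set f : EuclideanSpace ℝ (Fin m) → EuclideanSpace ℝ (Fin m) := fun y => χ (φ y) with hfdef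
  have hfCD : ∀ y ∈ V, ContDiffAt ℝ k f y := fun y hy =>
    (χ.contDiff.contDiffAt).comp y (hφCD y hy)
  have hf'bij : Function.Bijective (χ.comp Dφ₀) := by
    have hinj : Function.Injective (χ.comp Dφ₀) := by
      intro a b hab
      apply hDφ₀inj
      have ha : Dφ₀ a - Dφ₀ b ∈ T := ⟨a - b, by simp⟩
      have : χ (Dφ₀ a - Dφ₀ b) = 0 := by
        simp only [map_sub]
        simpa [sub_eq_zero] using hab
      have := hχinjT _ ha this
      rwa [sub_eq_zero] at this
    constructor
    · exact hinj
    · have := (LinearMap.injective_iff_surjective_of_finrank_eq_finrank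
        (f := ((χ.comp Dφ₀) : EuclideanSpace ℝ (Fin m) →ₗ[ℝ] EuclideanSpace ℝ (Fin m))) rfl).mp hinj
      exact this
  set equivf : EuclideanSpace ℝ (Fin m) ≃L[ℝ] EuclideanSpace ℝ (Fin m) :=
    (LinearEquiv.ofBijective
      ((χ.comp Dφ₀) : EuclideanSpace ℝ (Fin m) →ₗ[ℝ] EuclideanSpace ℝ (Fin m))
      hf'bij).toContinuousLinearEquiv with hequivfdef
  have hequivf_coe : (equivf : EuclideanSpace ℝ (Fin m) →L[ℝ] EuclideanSpace ℝ (Fin m))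
      = χ.comp Dφ₀ := by
    ext x
    rfl
  have hfderiv : HasFDerivAt f (equivf : EuclideanSpace ℝ (Fin m) →L[ℝ]
      EuclideanSpace ℝ (Fin m)) y₀ := by
    rw [hequivf_coe]
    exact χ.hasFDerivAt.comp y₀ (hφdiff y₀ hy₀V).hasFDerivAt
  have hstrict : HasStrictFDerivAt f (equivf : EuclideanSpace ℝ (Fin m) →L[ℝ]
      EuclideanSpace ℝ (Fin m)) y₀ := (hfCD y₀ hy₀V).hasStrictFDerivAt' hfderiv hkn
  set t₀ : EuclideanSpace ℝ (Fin m) := f y₀ with ht₀def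
  set g : EuclideanSpace ℝ (Fin m) → EuclideanSpace ℝ (Fin m) :=
    hstrict.localInverse f equivf y₀ with hgdef
  have hgleft : ∀ᶠ y in nhds y₀, g (f y) = y := hstrict.eventually_left_inverse
  have hgright : ∀ᶠ t in nhds t₀, f (g t) = t := hstrict.eventually_right_inverse
  have hg0 : g t₀ = y₀ := hstrict.localInverse_apply_image
  have hgCD : ContDiffAt ℝ k g t₀ := (hfCD y₀ hy₀V).to_localInverse hfderiv hkn
  -- the local section γ of M over the chart χ
  obtain ⟨u, humem, hgu⟩ : ∃ u ∈ nhds t₀, ContDiffOn ℝ k g u :=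
    hgCD.contDiffOn le_rfl (by simp)
  have hev : ∀ᶠ t in nhds t₀, g t ∈ V ∧ f (g t) = t := by
    have h1 : ∀ᶠ t in nhds t₀, g t ∈ V := by
      have : ContinuousAt g t₀ := hgCD.continuousAt
      have := this.preimage_mem_nhds (hP.isOpen_V.mem_nhds (hg0 ▸ hy₀V))
      exact this
    exact h1.and hgright
  obtain ⟨O₁, hO₁, hO₁open, ht₀O₁⟩ := eventually_nhds_iff.mp hev
  set Oγ : Set (EuclideanSpace ℝ (Fin m)) := O₁ ∩ interior u with hOγdef
  have hOγopen : IsOpen Oγ := hO₁open.inter isOpen_interior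
  have ht₀Oγ : t₀ ∈ Oγ := ⟨ht₀O₁, mem_interior_iff_mem_nhds.mpr humem⟩
  have hOγV : ∀ t ∈ Oγ, g t ∈ V := fun t ht => (hO₁ t ht.1).1
  have hfg : ∀ t ∈ Oγ, f (g t) = t := fun t ht => (hO₁ t ht.1).2
  set γ : EuclideanSpace ℝ (Fin m) → H := fun t => φ (g t) with hγdef
  have hγCD : ContDiffOn ℝ k γ Oγ :=
    hP.contDiffOn.comp ((hgu.mono interior_subset).mono inter_subset_right) hOγV
  have hγM : ∀ t ∈ Oγ, γ t ∈ M := by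
    intro t ht
    have : φ (g t) ∈ φ '' V := mem_image_of_mem φ (hOγV t ht)
    rw [hP.image_eq] at this
    exact this.2
  have hχγ : ∀ t ∈ Oγ, χ (γ t) = t := fun t ht => hfg t ht
  have hγ0 : γ t₀ = h₀ := by rw [hγdef]; simp only [hg0, hφy₀]
  have hγdiff : ∀ t ∈ Oγ, HasFDerivAt γ (fderiv ℝ γ t) t := by
    intro t ht
    exact (((hγCD.contDiffAt (hOγopen.mem_nhds ht)).differentiableAt hkn)).hasFDerivAt
  have hχDγ : ∀ t ∈ Oγ, ∀ v, χ (fderiv ℝ γ t v) = v := by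
    intro t ht v
    have h1 : HasFDerivAt (fun s => χ (γ s)) (χ.comp (fderiv ℝ γ t)) t :=
      χ.hasFDerivAt.comp t (hγdiff t ht)
    have h2 : HasFDerivAt (fun s => χ (γ s))
        (ContinuousLinearMap.id ℝ (EuclideanSpace ℝ (Fin m))) t := by
      have : (fun s => χ (γ s)) =ᶠ[nhds t] id := by
        filter_upwards [hOγopen.mem_nhds ht] with s hs using hχγ s hs
      exact (hasFDerivAt_id t).congr_of_eventuallyEq this
    have := h1.unique h2
    calc χ (fderiv ℝ γ t v) = (χ.comp (fderiv ℝ γ t)) v := rfl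
      _ = v := by rw [this]; rfl
  -- the neighborhood U₂ on which M is a graph over the chart
  obtain ⟨ψ, hψcont, hψ⟩ := hP.exists_contInv
  have hψh₀ : ψ h₀ = y₀ := by rw [← hφy₀]; exact hψ y₀ hy₀V
  obtain ⟨W, hW, hWopen, hy₀W⟩ : ∃ W, (∀ y ∈ W, y ∈ V ∧ f y ∈ Oγ ∧ g (f y) = y) ∧
      IsOpen W ∧ y₀ ∈ W := by
    apply eventually_nhds_iff.mp
    have h1 : ∀ᶠ y in nhds y₀, y ∈ V := hP.isOpen_V.mem_nhds hy₀V
    have h2 : ∀ᶠ y in nhds y₀, f y ∈ Oγ := by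
      have hfc : ContinuousAt f y₀ := (hfCD y₀ hy₀V).continuousAt
      exact hfc.preimage_mem_nhds (hOγopen.mem_nhds ht₀Oγ)
    filter_upwards [h1, h2, hgleft] with y hy1 hy2 hy3 using ⟨hy1, hy2, hy3⟩
  obtain ⟨A, hAsub, hAopen, h₀A⟩ : ∃ A, A ∩ (U₁ ∩ M) ⊆ ψ ⁻¹' W ∧ IsOpen A ∧ h₀ ∈ A := by
    have hc : ContinuousWithinAt ψ (U₁ ∩ M) h₀ := hψcont h₀ ⟨hP.h₀_mem_U, h₀M⟩
    have : ψ ⁻¹' W ∈ nhdsWithin h₀ (U₁ ∩ M) :=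
      hc.preimage_mem_nhdsWithin (hWopen.mem_nhds (hψh₀ ▸ hy₀W))
    rw [mem_nhdsWithin] at this
    obtain ⟨A, hAopen, h₀A, hA⟩ := this
    exact ⟨A, fun x hx => hA ⟨hx.1, hx.2⟩, hAopen, h₀A⟩
  set U₂ : Set H := A ∩ U₁ ∩ U with hU₂def
  have hU₂open : IsOpen U₂ := (hAopen.inter hP.isOpen_U).inter hU
  have h₀U₂ : h₀ ∈ U₂ := ⟨⟨h₀A, hP.h₀_mem_U⟩, h₀U⟩
  have hU₂U : U₂ ⊆ U := inter_subset_right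
  have hU₂graph : ∀ h ∈ U₂ ∩ M, χ h ∈ Oγ ∧ γ (χ h) = h := by
    rintro h ⟨⟨⟨hA', hU₁'⟩, hU'⟩, hM'⟩
    have himg : h ∈ φ '' V := by rw [hP.image_eq]; exact ⟨hU₁', hM'⟩
    obtain ⟨y, hyV, hyh⟩ := himg
    have hψh : ψ h = y := by rw [← hyh]; exact hψ y hyV
    have hyW : y ∈ W := by
      have : h ∈ A ∩ (U₁ ∩ M) := ⟨hA', hU₁', hM'⟩
      have := hAsub this
      rwa [mem_preimage, hψh] at this
    obtain ⟨hyV', hfyOγ, hgfy⟩ := hW y hyW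
    have hχh : χ h = f y := by rw [← hyh]
    constructor
    · rw [hχh]; exact hfyOγ
    · rw [hχh, hγdef]; simp only [hgfy, hyh]
  -- choice of the radius r₀
  obtain ⟨r₀, hr₀pos, hr₀⟩ : ∃ r₀ > 0, Metric.ball t₀ r₀ ⊆ Oγ ∩ γ ⁻¹' U₂ := by
    apply Metric.mem_nhds_iff.mp
    have h1 : Oγ ∈ nhds t₀ := hOγopen.mem_nhds ht₀Oγ
    have h2 : γ ⁻¹' U₂ ∈ nhds t₀ := by
      have : ContinuousAt γ t₀ := (hγCD.contDiffAt (hOγopen.mem_nhds ht₀Oγ)).continuousAt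
      exact this.preimage_mem_nhds (hU₂open.mem_nhds (hγ0 ▸ h₀U₂))
    exact Filter.inter_mem h1 h2
  have hball : Metric.ball t₀ r₀ ⊆ Oγ := fun t ht => (hr₀ ht).1
  have hγball : ∀ t ∈ Metric.ball t₀ r₀, γ t ∈ U₂ := fun t ht => (hr₀ ht).2
  -- Claim D : the derivative of γ sends χ ℓ to ℓ, for ℓ ∈ L
  have hD : ∀ t ∈ Metric.ball t₀ r₀, ∀ ℓ ∈ (L : Set H), fderiv ℝ γ t (χ ℓ) = ℓ := by
    intro t ht ℓ hℓ
    have htOγ : t ∈ Oγ := hball ht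
    have hγtM : γ t ∈ M := hγM t htOγ
    have hγtU₂ : γ t ∈ U₂ := hγball t ht
    obtain ⟨V₂, φ₂, U₂', hP₂, y₂, hy₂, hφ₂y₂, w, hw⟩ :=
      htang (γ t) ⟨hU₂U hγtU₂, hγtM⟩ hℓ
    have hφ₂CD : ContDiffAt ℝ k φ₂ y₂ := hP₂.contDiffOn.contDiffAt (hP₂.isOpen_V.mem_nhds hy₂)
    have hφ₂cont : ContinuousAt φ₂ y₂ := hφ₂CD.continuousAt
    have hevU₂ : ∀ᶠ y in nhds y₂, φ₂ y ∈ U₂ :=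
      hφ₂cont.preimage_mem_nhds (hU₂open.mem_nhds (hφ₂y₂ ▸ hγtU₂))
    have hevV₂ : ∀ᶠ y in nhds y₂, y ∈ V₂ := hP₂.isOpen_V.mem_nhds hy₂
    have hevgraph : ∀ᶠ y in nhds y₂, φ₂ y = γ (χ (φ₂ y)) ∧ χ (φ₂ y) ∈ Oγ := by
      filter_upwards [hevU₂, hevV₂] with y h1 h2
      have hMy : φ₂ y ∈ M := by
        have : φ₂ y ∈ φ₂ '' V₂ := mem_image_of_mem _ h2
        rw [hP₂.image_eq] at this; exact this.2
      have := hU₂graph (φ₂ y) ⟨h1, hMy⟩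
      exact ⟨this.2.symm, this.1⟩
    set θ : EuclideanSpace ℝ (Fin m) → EuclideanSpace ℝ (Fin m) := fun y => χ (φ₂ y) with hθdef
    have hθy₂ : θ y₂ = t := by
      rw [hθdef]; simp only [hφ₂y₂]; exact hχγ t htOγ
    have hθdiff : DifferentiableAt ℝ θ y₂ :=
      χ.differentiableAt.comp y₂ (hφ₂CD.differentiableAt hkn)
    have hγdiffat : DifferentiableAt ℝ γ (θ y₂) := by
      rw [hθy₂]
      exact (hγCD.contDiffAt (hOγopen.mem_nhds htOγ)).differentiableAt hkn
    have heq : fderiv ℝ φ₂ y₂ = (fderiv ℝ γ t).comp (fderiv ℝ θ y₂) := by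
      have h1 : φ₂ =ᶠ[nhds y₂] (γ ∘ θ) := by
        filter_upwards [hevgraph] with y hy using hy.1
      rw [h1.fderiv_eq]
      rw [fderiv_comp y₂ hγdiffat hθdiff, hθy₂]
    have hkey : ℓ = fderiv ℝ γ t (fderiv ℝ θ y₂ w) := by
      rw [← hw, heq]; rfl
    have hχℓ : χ ℓ = fderiv ℝ θ y₂ w := by
      rw [hkey, hχDγ t htOγ]
    rw [hχℓ]; exact hkey.symm
  -- L is contained in T
  have hLT : ∀ ℓ ∈ (L : Set H), ℓ ∈ T := by
    intro ℓ hℓ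
    have hD0 := hD t₀ (Metric.mem_ball_self hr₀pos) ℓ hℓ
    have hgdiff0 : DifferentiableAt ℝ g t₀ := hgCD.differentiableAt hkn
    have hφdiff0 : DifferentiableAt ℝ φ (g t₀) := by rw [hg0]; exact hφdiff y₀ hy₀V
    have hcomp : fderiv ℝ γ t₀ = (fderiv ℝ φ y₀).comp (fderiv ℝ g t₀) := by
      have h1 : fderiv ℝ γ t₀ = fderiv ℝ (φ ∘ g) t₀ := rfl
      rw [h1, fderiv_comp t₀ hφdiff0 hgdiff0, hg0]
    rw [← hD0, hcomp]
    exact ⟨fderiv ℝ g t₀ (χ ℓ), rfl⟩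
  -- Claim E : translation invariance along L
  have hE : ∀ t ∈ Metric.ball t₀ r₀, ∀ ℓ ∈ (L : Set H),
      t + χ ℓ ∈ Metric.ball t₀ r₀ → γ (t + χ ℓ) = γ t + ℓ := by
    intro t ht ℓ hℓ ht'
    set c : ℝ → H := fun s => γ (t + s • χ ℓ) - s • ℓ with hcdef
    set I : Set ℝ := {s : ℝ | t + s • χ ℓ ∈ Metric.ball t₀ r₀} with hIdef
    have hIopen : IsOpen I := by
      have hcont : Continuous fun s : ℝ => t + s • χ ℓ :=
        continuous_const.add (continuous_id.smul continuous_const)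
      exact Metric.isOpen_ball.preimage hcont
    have hIconv : Convex ℝ I := by
      intro s1 h1 s2 h2 a b ha hb hab
      have key : t + (a • s1 + b • s2) • χ ℓ
          = a • (t + s1 • χ ℓ) + b • (t + s2 • χ ℓ) := by
        rw [smul_add, smul_add, smul_smul, smul_smul]
        rw [add_add_add_comm, ← add_smul, hab, one_smul, ← add_smul]
        norm_num [smul_eq_mul]
      show t + (a • s1 + b • s2) • χ ℓ ∈ Metric.ball t₀ r₀
      rw [key]
      exact convex_ball t₀ r₀ h1 h2 ha hb hab
    have hderiv : ∀ s ∈ I, HasDerivAt c 0 s := by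
      intro s hs
      have h1 : HasDerivAt (fun s : ℝ => t + s • χ ℓ) (χ ℓ) s := by
        simpa using ((hasDerivAt_id s).smul_const (χ ℓ)).const_add t
      have h2 : HasDerivAt (fun s : ℝ => γ (t + s • χ ℓ))
          (fderiv ℝ γ (t + s • χ ℓ) (χ ℓ)) s :=
        HasFDerivAt.comp_hasDerivAt (l := γ) (f := fun s : ℝ => t + s • χ ℓ) s (hγdiff _ (hball hs)) h1
      have h3 : HasDerivAt (fun s : ℝ => s • ℓ) ℓ s := by
        simpa using (hasDerivAt_id s).smul_const ℓ
      have h4 := h2.sub h3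
      rw [hD _ hs ℓ hℓ, sub_self] at h4
      exact h4
    have hc01 : c 1 = c 0 := by
      have hdiffOn : DifferentiableOn ℝ c I :=
        fun s hs => ((hderiv s hs).differentiableAt).differentiableWithinAt
      have hfd : ∀ s ∈ I, fderivWithin ℝ c I s = 0 := by
        intro s hs
        have hF : HasFDerivAt c ((1 : ℝ →L[ℝ] ℝ).smulRight (0 : H)) s := hderiv s hs
        rw [fderivWithin_of_isOpen hIopen hs, hF.fderiv]
        apply ContinuousLinearMap.ext
        intro v
        simp
      have h0I : (0 : ℝ) ∈ I := by simpa [hIdef] using ht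
      have h1I : (1 : ℝ) ∈ I := by simpa [hIdef] using ht'
      exact hIconv.is_const_of_fderivWithin_eq_zero hdiffOn hfd h1I h0I
    have := hc01
    simp only [hcdef, one_smul, zero_smul, add_zero, sub_zero] at this
    linear_combination (norm := abel1) this
  -- orthogonal projections onto L and Lᗮ
  set P : H → H := fun h => (Submodule.orthogonalProjectionOnto L h : H) with hPdef
  have hPQ : ∀ h : H, P h + (Submodule.orthogonalProjectionOnto Lᗮ h : H) = h := fun h =>
    Submodule.starProjection_add_starProjection_orthogonal (K := L) h
  have hQdef : ∀ h : H, (Submodule.orthogonalProjectionOnto Lᗮ h : H) = h - P h := by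
    intro h; rw [eq_sub_iff_add_eq, add_comm]; exact hPQ h
  have hPL : ∀ h : H, P h ∈ L := fun h => (Submodule.orthogonalProjectionOnto L h).2
  have hPself : ∀ x ∈ L, P x = x := by
    intro x hx
    simp only [hPdef]
    exact Submodule.starProjection_eq_self_iff.mpr hx
  have hPLperp : ∀ x ∈ Lᗮ, P x = 0 := by
    intro x hx
    rw [hPdef]
    simp [Submodule.orthogonalProjectionOnto_apply_of_mem_orthogonal hx]
  -- the subspaces K = χ(L) and N = Kᗮ of ℝᵐ
  set K : Submodule ℝ (EuclideanSpace ℝ (Fin m)) := Submodule.map (χ : H →ₗ[ℝ] EuclideanSpace ℝ (Fin m)) L with hKdef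
  have hχinjL : ∀ x ∈ L, χ x = 0 → x = 0 := fun x hx h => hχinjT x (hLT x hx) h
  have hKrank : Module.finrank ℝ K = p := by
    have hinj : Function.Injective ((↑χ : H →ₗ[ℝ] EuclideanSpace ℝ (Fin m)).comp L.subtype) := by
      intro a b hab
      have h1 : χ ((a : H) - b) = 0 := by
        simp only [map_sub]
        simpa [sub_eq_zero] using hab
      have h2 : ((a : H) - b) ∈ L := sub_mem a.2 b.2
      have := hχinjL _ h2 h1
      exact Subtype.ext (by rwa [sub_eq_zero] at this)
    have hrange : LinearMap.range ((↑χ : H →ₗ[ℝ] EuclideanSpace ℝ (Fin m)).comp L.subtype)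
        = K := by
      rw [LinearMap.range_comp, Submodule.range_subtype]
    rw [← hrange, LinearMap.finrank_range_of_inj hinj, hdim]
  set N : Submodule ℝ (EuclideanSpace ℝ (Fin m)) := Kᗮ with hNdef
  have hNK : Nᗮ = K := Submodule.orthogonal_orthogonal K
  have hNrank : Module.finrank ℝ N = m - p := by
    have := Submodule.finrank_add_finrank_orthogonal K
    rw [hKrank, finrank_euclideanSpace_fin] at this
    rw [hNdef]
    omega
  set isoN : EuclideanSpace ℝ (Fin (m - p)) ≃ₗᵢ[ℝ] N :=
    ((stdOrthonormalBasis ℝ N).reindex (finCongr hNrank)).repr.symm with hisoNdef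
  set j : EuclideanSpace ℝ (Fin (m - p)) →L[ℝ] EuclideanSpace ℝ (Fin m) :=
    N.subtypeL.comp isoN.toLinearIsometry.toContinuousLinearMap with hjdef
  have hjiso : ∀ z, j z = ((isoN z : N) : EuclideanSpace ℝ (Fin m)) := fun z => rfl
  have hjN : ∀ z, j z ∈ N := fun z => (isoN z).2
  have hjnorm : ∀ z, ‖j z‖ = ‖z‖ := by
    intro z
    rw [hjiso]
    rw [show ‖((isoN z : N) : EuclideanSpace ℝ (Fin m))‖ = ‖(isoN z : N)‖ from rfl]
    exact isoN.norm_map z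
  set projN : EuclideanSpace ℝ (Fin m) →L[ℝ] N := Submodule.orthogonalProjectionOnto N with hprojNdef
  have hprojN_K : ∀ v ∈ K, projN v = 0 := by
    intro v hv
    exact Submodule.orthogonalProjectionOnto_apply_of_mem_orthogonal (hNK ▸ hv)
  have hprojN_self : ∀ w : N, projN (w : EuclideanSpace ℝ (Fin m)) = w := fun w =>
    Submodule.orthogonalProjectionOnto_mem_subspace_eq_self w
  have hχK : ∀ x ∈ L, χ x ∈ K := fun x hx => Submodule.mem_map_of_mem hx
  -- the linear identification of ℝᵖ with L
  set Tc : EuclideanSpace ℝ (Fin p) ≃L[ℝ] L :=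
    ContinuousLinearEquiv.ofFinrankEq (by rw [finrank_euclideanSpace_fin, hdim]) with hTcdef
  -- the radius r₁
  have hχh₀ : χ h₀ = t₀ := by rw [← hφy₀]
  obtain ⟨r₁, hr₁pos, hr₁le, hr₁⟩ : ∃ r₁ > 0, r₁ ≤ r₀ / 16 ∧
      ∀ z : EuclideanSpace ℝ (Fin (m - p)), ‖z‖ < r₁ →
        ‖P (γ (t₀ + j z)) - P h₀‖ < r₀ / 16 := by
    have hcont0 : ContinuousAt (fun z : EuclideanSpace ℝ (Fin (m - p)) =>
        P (γ (t₀ + j z))) 0 := by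
      have hc1 : ContinuousAt (fun z : EuclideanSpace ℝ (Fin (m - p)) => t₀ + j z) 0 :=
        (continuous_const.add j.continuous).continuousAt
      have hc2 : ContinuousAt γ ((fun z : EuclideanSpace ℝ (Fin (m - p)) => t₀ + j z) 0) := by
        show ContinuousAt γ (t₀ + j 0)
        rw [map_zero, add_zero]
        exact (hγCD.contDiffAt (hOγopen.mem_nhds ht₀Oγ)).continuousAt
      have hc4 : ContinuousAt (fun z : EuclideanSpace ℝ (Fin (m - p)) => γ (t₀ + j z)) 0 :=
        ContinuousAt.comp (f := fun z : EuclideanSpace ℝ (Fin (m - p)) => t₀ + j z) hc2 hc1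
      have hc3 : Continuous P := continuous_subtype_val.comp (Submodule.orthogonalProjectionOnto L).continuous
      exact hc3.continuousAt.comp hc4
    have hval : P (γ (t₀ + j 0)) = P h₀ := by rw [map_zero, add_zero, hγ0]
    rw [Metric.continuousAt_iff] at hcont0
    obtain ⟨δ, hδpos, hδ⟩ := hcont0 (r₀ / 16) (by positivity)
    refine ⟨min δ (r₀ / 16), by positivity, min_le_right _ _, ?_⟩
    intro z hz
    have := hδ (show dist z 0 < δ by
      rw [dist_zero_right]; exact lt_of_lt_of_le hz (min_le_left _ _))
    rwa [hval, dist_eq_norm] at this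
  -- final data
  set r₂ : ℝ := r₀ / 16 with hr₂def
  set r₃ : ℝ := r₀ / 4 with hr₃def
  set V₁ : Set (EuclideanSpace ℝ (Fin (m - p))) := Metric.ball 0 r₁ with hV₁def
  set V₂ : Set (EuclideanSpace ℝ (Fin p)) := {y₂ | ‖((Tc y₂ : L) : H) - P h₀‖ < r₂} with hV₂def
  set φ₁ : EuclideanSpace ℝ (Fin (m - p)) → Lᗮ :=
    fun z => Submodule.orthogonalProjectionOnto Lᗮ (γ (t₀ + j z)) with hφ₁def
  set Φ : EuclideanSpace ℝ (Fin (m - p)) × EuclideanSpace ℝ (Fin p) → H :=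
    fun y => ((φ₁ y.1 : H) + ((Tc y.2 : L) : H)) with hΦdef
  have hPt : ∀ y : EuclideanSpace ℝ (Fin (m - p)) × EuclideanSpace ℝ (Fin p),
      y ∈ V₁ ×ˢ V₂ →
      Φ y ∈ M ∧ Φ y ∈ U₂ ∧ projN (χ (Φ y) - t₀) = isoN y.1 ∧
        Submodule.orthogonalProjectionOnto L (Φ y) = Tc y.2 ∧
        ‖(χ (Φ y) - t₀) - ((projN (χ (Φ y) - t₀) : N) : EuclideanSpace ℝ (Fin m))‖ < r₃ := by
    rintro ⟨y1, y2⟩ ⟨hy1, hy2⟩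
    simp only [hV₁def, Metric.mem_ball, dist_zero_right] at hy1
    have hy2' : ‖((Tc y2 : L) : H) - P h₀‖ < r₂ := hy2
    set t : EuclideanSpace ℝ (Fin m) := t₀ + j y1 with htdef
    have htball : t ∈ Metric.ball t₀ r₀ := by
      rw [Metric.mem_ball, dist_eq_norm, htdef, add_comm, add_sub_cancel_right]
      calc ‖j y1‖ = ‖y1‖ := hjnorm y1
        _ < r₁ := hy1
        _ ≤ r₀ / 16 := hr₁le
        _ < r₀ := by linarith
    set ℓy : H := ((Tc y2 : L) : H) - P (γ t) with hℓydef
    have hℓyL : ℓy ∈ L := sub_mem (Tc y2).2 (hPL _)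
    have hℓynorm : ‖ℓy‖ < r₀ / 8 := by
      have h1 : ‖P (γ t) - P h₀‖ < r₀ / 16 := hr₁ y1 hy1
      calc ‖ℓy‖ = ‖(((Tc y2 : L) : H) - P h₀) - (P (γ t) - P h₀)‖ := by
            rw [hℓydef]; congr 1; abel
        _ ≤ ‖((Tc y2 : L) : H) - P h₀‖ + ‖P (γ t) - P h₀‖ := norm_sub_le _ _
        _ < r₂ + r₀ / 16 := add_lt_add hy2' h1
        _ ≤ r₀ / 8 := by rw [hr₂def]; linarith
    have htball' : t + χ ℓy ∈ Metric.ball t₀ r₀ := by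
      rw [Metric.mem_ball, dist_eq_norm, htdef]
      have heq : t₀ + j y1 + χ ℓy - t₀ = j y1 + χ ℓy := by abel
      rw [heq]
      calc ‖j y1 + χ ℓy‖ ≤ ‖j y1‖ + ‖χ ℓy‖ := norm_add_le _ _
        _ ≤ ‖y1‖ + ‖ℓy‖ := by rw [hjnorm]; exact add_le_add le_rfl (hχnorm _)
        _ < r₁ + r₀ / 8 := add_lt_add hy1 hℓynorm
        _ ≤ r₀ / 16 + r₀ / 8 := by linarith
        _ < r₀ := by linarith
    have hEy := hE t htball ℓy hℓyL htball'
    have hΦeq : Φ (y1, y2) = γ t + ℓy := by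
      simp only [hΦdef, hφ₁def]
      rw [← htdef, hQdef (γ t), hℓydef]
      abel
    have hΦγ : Φ (y1, y2) = γ (t + χ ℓy) := by rw [hEy, hΦeq]
    have hχΦ : χ (Φ (y1, y2)) = t + χ ℓy := by rw [hΦγ]; exact hχγ _ (hball htball')
    have heq1 : χ (Φ (y1, y2)) - t₀ = j y1 + χ ℓy := by rw [hχΦ, htdef]; abel
    have heq2 : projN (χ (Φ (y1, y2)) - t₀) = isoN y1 := by
      have h0 : projN (χ ℓy) = 0 := hprojN_K _ (hχK _ hℓyL)
      rw [heq1, map_add, h0, add_zero, hjiso, hprojN_self]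
    refine ⟨?_, ?_, heq2, ?_, ?_⟩
    · rw [hΦγ]; exact hγM _ (hball htball')
    · rw [hΦγ]; exact hγball _ htball'
    · have h1 : Submodule.orthogonalProjectionOnto L ((φ₁ y1 : H)) = 0 :=
        Submodule.orthogonalProjectionOnto_apply_of_mem_orthogonal (φ₁ y1).2
      have h2 : Submodule.orthogonalProjectionOnto L (((Tc y2 : L) : H)) = Tc y2 :=
        Submodule.orthogonalProjectionOnto_mem_subspace_eq_self _
      simp only [hΦdef, map_add, h1, h2, zero_add]
    · rw [heq2, ← hjiso, heq1]
      have heq3 : j y1 + χ ℓy - j y1 = χ ℓy := by abel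
      rw [heq3]
      calc ‖χ ℓy‖ ≤ ‖ℓy‖ := hχnorm _
        _ < r₀ / 8 := hℓynorm
        _ < r₃ := by rw [hr₃def]; linarith
  set ψ' : H → EuclideanSpace ℝ (Fin (m - p)) × EuclideanSpace ℝ (Fin p) :=
    fun h => (isoN.symm (projN (χ h - t₀)), Tc.symm (Submodule.orthogonalProjectionOnto L h)) with hψ'def
  set U' : Set H := {h | h ∈ U₂ ∧
      ‖((projN (χ h - t₀) : N) : EuclideanSpace ℝ (Fin m))‖ < r₁ ∧
      ‖P h - P h₀‖ < r₂ ∧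
      ‖(χ h - t₀) - ((projN (χ h - t₀) : N) : EuclideanSpace ℝ (Fin m))‖ < r₃} with hU'def
  have hψ'Φ : ∀ y ∈ V₁ ×ˢ V₂, ψ' (Φ y) = y := by
    rintro ⟨y1, y2⟩ hy
    obtain ⟨-, -, h3, h4, -⟩ := hPt (y1, y2) hy
    simp only [hψ'def]
    rw [h3, h4]
    simp
  have himsub : ∀ y ∈ V₁ ×ˢ V₂, Φ y ∈ U' ∩ M := by
    rintro ⟨y1, y2⟩ hy
    obtain ⟨hM', hU₂', h3, h4, h5⟩ := hPt (y1, y2) hy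
    obtain ⟨hy1, hy2⟩ := hy
    simp only [hV₁def, Metric.mem_ball, dist_zero_right] at hy1
    refine ⟨⟨hU₂', ?_, ?_, h5⟩, hM'⟩
    · rw [h3]
      calc ‖((isoN y1 : N) : EuclideanSpace ℝ (Fin m))‖ = ‖y1‖ := by
            rw [← hjiso]; exact hjnorm y1
        _ < r₁ := hy1
    · have : P (Φ (y1, y2)) = ((Tc y2 : L) : H) := by
        simp only [hPdef]; rw [h4]
      rw [this]
      exact hy2
  have hGr : ∀ h ∈ U' ∩ M, ψ' h ∈ V₁ ×ˢ V₂ ∧ Φ (ψ' h) = h := by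
    rintro h ⟨⟨hhU₂, hn1, hn2, hn3⟩, hhM⟩
    obtain ⟨hχhOγ, hγχh⟩ := hU₂graph h ⟨hhU₂, hhM⟩
    set n : EuclideanSpace ℝ (Fin m) := ((projN (χ h - t₀) : N) : EuclideanSpace ℝ (Fin m))
      with hndef
    set κ : EuclideanSpace ℝ (Fin m) := (χ h - t₀) - n with hκdef
    have hκK : κ ∈ K := by
      rw [← hNK]
      exact Submodule.sub_starProjection_mem_orthogonal (K := N) (χ h - t₀)
    obtain ⟨ℓh, hℓhL, hχℓh⟩ : ∃ x ∈ L, χ x = κ := by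
      rw [hKdef, Submodule.mem_map] at hκK
      obtain ⟨x, hx1, hx2⟩ := hκK
      exact ⟨x, hx1, hx2⟩
    have htball : t₀ + n ∈ Metric.ball t₀ r₀ := by
      rw [Metric.mem_ball, dist_eq_norm, add_comm, add_sub_cancel_right]
      calc ‖n‖ < r₁ := hn1
        _ ≤ r₀ / 16 := hr₁le
        _ < r₀ := by linarith
    have hargeq : (t₀ + n) + χ ℓh = χ h := by rw [hχℓh, hκdef]; abel
    have htball' : (t₀ + n) + χ ℓh ∈ Metric.ball t₀ r₀ := by
      rw [hargeq, Metric.mem_ball, dist_eq_norm]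
      have : χ h - t₀ = n + κ := by rw [hκdef]; abel
      rw [this]
      calc ‖n + κ‖ ≤ ‖n‖ + ‖κ‖ := norm_add_le _ _
        _ < r₁ + r₃ := add_lt_add hn1 hn3
        _ ≤ r₀ / 16 + r₀ / 4 := by rw [hr₃def]; linarith
        _ < r₀ := by linarith
    have hEh := hE (t₀ + n) htball ℓh hℓhL htball'
    rw [hargeq, hγχh] at hEh
    -- hEh : h = γ (t₀ + n) + ℓh
    constructor
    · constructor
      · show isoN.symm (projN (χ h - t₀)) ∈ V₁
        rw [hV₁def, Metric.mem_ball, dist_zero_right]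
        calc ‖isoN.symm (projN (χ h - t₀))‖ = ‖projN (χ h - t₀)‖ :=
              isoN.symm.norm_map _
          _ = ‖n‖ := rfl
          _ < r₁ := hn1
      · show ‖((Tc (Tc.symm (Submodule.orthogonalProjectionOnto L h)) : L) : H) - P h₀‖ < r₂
        rw [Tc.apply_symm_apply]
        exact hn2
    · show Φ (ψ' h) = h
      have hj1 : j (isoN.symm (projN (χ h - t₀))) = n := by
        rw [hjiso, isoN.apply_symm_apply]
      simp only [hΦdef, hψ'def, hφ₁def]
      rw [hj1, Tc.apply_symm_apply]
      have hPh : (Submodule.orthogonalProjectionOnto L h : H) = P (γ (t₀ + n)) + ℓh := by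
        rw [hEh]
        simp only [hPdef, map_add]
        push_cast
        congr 1
        exact hPself ℓh hℓhL
      rw [hQdef (γ (t₀ + n)), hPh, hEh]
      abel
  have hV₂open : IsOpen V₂ := by
    have hcont : Continuous fun y₂ : EuclideanSpace ℝ (Fin p) => ‖((Tc y₂ : L) : H) - P h₀‖ :=
      ((continuous_subtype_val.comp Tc.continuous).sub continuous_const).norm
    exact isOpen_lt hcont continuous_const
  have hmapsV₁ : ∀ z ∈ V₁, t₀ + j z ∈ Metric.ball t₀ r₀ := by
    intro z hz
    rw [hV₁def, Metric.mem_ball, dist_zero_right] at hz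
    rw [Metric.mem_ball, dist_eq_norm, add_comm, add_sub_cancel_right, hjnorm]
    calc ‖z‖ < r₁ := hz
      _ ≤ r₀ / 16 := hr₁le
      _ < r₀ := by linarith
  have hφ₁CD : ContDiffOn ℝ k φ₁ V₁ := by
    have hinner : ContDiff ℝ k fun z : EuclideanSpace ℝ (Fin (m - p)) => t₀ + j z :=
      contDiff_const.add j.contDiff
    have hcomp : ContDiffOn ℝ k (fun z => γ (t₀ + j z)) V₁ :=
      hγCD.comp hinner.contDiffOn (fun z hz => hball (hmapsV₁ z hz))
    exact (Submodule.orthogonalProjectionOnto Lᗮ).contDiff.comp_contDiffOn hcomp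
  have hΦCD : ContDiffOn ℝ k Φ (V₁ ×ˢ V₂) := by
    have h1 : ContDiffOn ℝ k (fun y : EuclideanSpace ℝ (Fin (m - p)) ×
        EuclideanSpace ℝ (Fin p) => ((φ₁ y.1 : H))) (V₁ ×ˢ V₂) := by
      have hin : ContDiff ℝ k fun y : EuclideanSpace ℝ (Fin (m - p)) ×
          EuclideanSpace ℝ (Fin p) => t₀ + j y.1 :=
        contDiff_const.add (j.contDiff.comp contDiff_fst)
      have hmid : ContDiffOn ℝ k (fun y : EuclideanSpace ℝ (Fin (m - p)) ×
          EuclideanSpace ℝ (Fin p) => γ (t₀ + j y.1)) (V₁ ×ˢ V₂) :=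
        hγCD.comp hin.contDiffOn (fun y hy => hball (hmapsV₁ y.1 hy.1))
      exact (Lᗮ.subtypeL.comp (Submodule.orthogonalProjectionOnto Lᗮ)).contDiff.comp_contDiffOn hmid
    have h2 : ContDiff ℝ k (fun y : EuclideanSpace ℝ (Fin (m - p)) ×
        EuclideanSpace ℝ (Fin p) => ((Tc y.2 : L) : H)) :=
      by have hc := ((L.subtypeL.comp (Tc : EuclideanSpace ℝ (Fin p) →L[ℝ] L)).comp
          (ContinuousLinearMap.snd ℝ (EuclideanSpace ℝ (Fin (m - p)))
            (EuclideanSpace ℝ (Fin p)))).contDiff (n := (k : WithTop ℕ∞)); exact hc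
    exact h1.add h2.contDiffOn
  have hU'open : IsOpen U' := by
    have hc0 : Continuous fun h : H => χ h - t₀ := χ.continuous.sub continuous_const
    have hc1 : Continuous fun h : H =>
        ((projN (χ h - t₀) : N) : EuclideanSpace ℝ (Fin m)) :=
      continuous_subtype_val.comp (projN.continuous.comp hc0)
    have hcP : Continuous P := continuous_subtype_val.comp (Submodule.orthogonalProjectionOnto L).continuous
    have e1 : IsOpen {h : H |
        ‖((projN (χ h - t₀) : N) : EuclideanSpace ℝ (Fin m))‖ < r₁} :=
      isOpen_lt hc1.norm continuous_const
    have e2 : IsOpen {h : H | ‖P h - P h₀‖ < r₂} :=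
      isOpen_lt ((hcP.sub continuous_const).norm) continuous_const
    have e3 : IsOpen {h : H |
        ‖(χ h - t₀) - ((projN (χ h - t₀) : N) : EuclideanSpace ℝ (Fin m))‖ < r₃} :=
      isOpen_lt ((hc0.sub hc1).norm) continuous_const
    have hsplit : U' = U₂ ∩ ({h : H |
        ‖((projN (χ h - t₀) : N) : EuclideanSpace ℝ (Fin m))‖ < r₁} ∩
        ({h : H | ‖P h - P h₀‖ < r₂} ∩ {h : H |
        ‖(χ h - t₀) - ((projN (χ h - t₀) : N) : EuclideanSpace ℝ (Fin m))‖ < r₃})) := by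
      ext h
      simp only [hU'def, mem_setOf_eq, mem_inter_iff, and_assoc]
    rw [hsplit]
    exact hU₂open.inter (e1.inter (e2.inter e3))
  have h₀U' : h₀ ∈ U' := by
    refine ⟨h₀U₂, ?_, ?_, ?_⟩
    · simp only [hχh₀, sub_self, map_zero, ZeroMemClass.coe_zero, norm_zero]
      exact hr₁pos
    · simp only [sub_self, norm_zero, hr₂def]
      linarith
    · simp only [hχh₀, sub_self, map_zero, ZeroMemClass.coe_zero, sub_zero, norm_zero, hr₃def]
      linarith
  have himage : Φ '' (V₁ ×ˢ V₂) = U' ∩ M := by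
    apply Subset.antisymm
    · rintro _ ⟨y, hy, rfl⟩
      exact himsub y hy
    · intro h hh
      obtain ⟨hmem, hΦψ⟩ := hGr h hh
      exact ⟨ψ' h, hmem, hΦψ⟩
  have hinjOn : Set.InjOn Φ (V₁ ×ˢ V₂) := by
    intro a ha b hb hab
    have := congrArg ψ' hab
    rwa [hψ'Φ a ha, hψ'Φ b hb] at this
  have hψ'cont : Continuous ψ' := by
    have hc0 : Continuous fun h : H => χ h - t₀ := χ.continuous.sub continuous_const
    exact Continuous.prodMk
      (isoN.symm.continuous.comp (projN.continuous.comp hc0))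
      (Tc.symm.continuous.comp (Submodule.orthogonalProjectionOnto L).continuous)
  have hfdinj : ∀ y ∈ V₁ ×ˢ V₂, Function.Injective (fderiv ℝ Φ y) := by
    intro y hy
    have hy1 : y.1 ∈ V₁ := hy.1
    have htball : t₀ + j y.1 ∈ Metric.ball t₀ r₀ := hmapsV₁ y.1 hy1
    set t : EuclideanSpace ℝ (Fin m) := t₀ + j y.1 with htdef
    set QC : H →L[ℝ] H := Lᗮ.subtypeL.comp (Submodule.orthogonalProjectionOnto Lᗮ) with hQCdef
    set TC : EuclideanSpace ℝ (Fin (m - p)) × EuclideanSpace ℝ (Fin p) →L[ℝ] H :=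
      (L.subtypeL.comp (Tc : EuclideanSpace ℝ (Fin p) →L[ℝ] L)).comp
        (ContinuousLinearMap.snd ℝ _ _) with hTCdef
    set JC : EuclideanSpace ℝ (Fin (m - p)) × EuclideanSpace ℝ (Fin p) →L[ℝ]
        EuclideanSpace ℝ (Fin m) := j.comp (ContinuousLinearMap.fst ℝ _ _) with hJCdef
    set D : EuclideanSpace ℝ (Fin (m - p)) × EuclideanSpace ℝ (Fin p) →L[ℝ] H :=
      (QC.comp ((fderiv ℝ γ t).comp JC)) + TC with hDdef
    have hγd : HasFDerivAt γ (fderiv ℝ γ t) t := hγdiff t (hball htball)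
    have hinner : HasFDerivAt (fun y' : EuclideanSpace ℝ (Fin (m - p)) ×
        EuclideanSpace ℝ (Fin p) => t₀ + j y'.1) JC y := JC.hasFDerivAt.const_add t₀
    have hcomp1 : HasFDerivAt (γ ∘ fun y' : EuclideanSpace ℝ (Fin (m - p)) ×
        EuclideanSpace ℝ (Fin p) => t₀ + j y'.1) ((fderiv ℝ γ t).comp JC) y :=
      hγd.comp y hinner
    have hQ1 : HasFDerivAt (⇑QC ∘ (γ ∘ fun y' : EuclideanSpace ℝ (Fin (m - p)) ×
        EuclideanSpace ℝ (Fin p) => t₀ + j y'.1))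
        (QC.comp ((fderiv ℝ γ t).comp JC)) y :=
      QC.hasFDerivAt.comp y hcomp1
    have hT1 : HasFDerivAt (fun y' : EuclideanSpace ℝ (Fin (m - p)) ×
        EuclideanSpace ℝ (Fin p) => ((Tc y'.2 : L) : H)) TC y := TC.hasFDerivAt
    have hΦd : HasFDerivAt Φ D y := by
      have h := hQ1.add hT1
      exact h
    rw [hΦd.fderiv]
    intro u v huv
    have hz : D (u - v) = 0 := by rw [map_sub, huv, sub_self]
    set w : EuclideanSpace ℝ (Fin (m - p)) × EuclideanSpace ℝ (Fin p) := u - v with hwdef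
    have hDw : QC (fderiv ℝ γ t (j w.1)) + ((Tc w.2 : L) : H) = 0 := hz
    have ha : QC (fderiv ℝ γ t (j w.1)) ∈ Lᗮ := (Submodule.orthogonalProjectionOnto Lᗮ _).2
    have hb : ((Tc w.2 : L) : H) ∈ L := (Tc w.2).2
    have hbzero : ((Tc w.2 : L) : H) = 0 := by
      have h1 : ((Tc w.2 : L) : H) = - QC (fderiv ℝ γ t (j w.1)) := by
        rw [eq_neg_iff_add_eq_zero, add_comm]
        exact hDw
      have h2 : ((Tc w.2 : L) : H) ∈ Lᗮ := by rw [h1]; exact neg_mem ha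
      have h3 : (inner ℝ (((Tc w.2 : L) : H)) (((Tc w.2 : L) : H)) : ℝ) = 0 :=
        (Submodule.mem_orthogonal L _).mp h2 _ hb
      exact inner_self_eq_zero.mp h3
    have hw2 : w.2 = 0 := by
      have hc : (Tc w.2 : L) = 0 := by
        exact Subtype.ext hbzero
      have : Tc w.2 = Tc 0 := by rw [map_zero]; exact hc
      exact Tc.injective this
    have hazero : QC (fderiv ℝ γ t (j w.1)) = 0 := by
      rw [hbzero, add_zero] at hDw
      exact hDw
    set v' : H := fderiv ℝ γ t (j w.1) with hv'def
    have hv'L : v' ∈ L := by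
      have h1 : (Submodule.orthogonalProjectionOnto Lᗮ v' : H) = v' - P v' := hQdef v'
      have h2 : (Submodule.orthogonalProjectionOnto Lᗮ v' : H) = 0 := hazero
      have h4 : v' = P v' := by
        rw [h2] at h1
        exact sub_eq_zero.mp h1.symm
      have := hPL v'
      rwa [← h4] at this
    have hχv' : χ v' = j w.1 := hχDγ t (hball htball) (j w.1)
    have hjw1K : j w.1 ∈ K := by rw [← hχv']; exact hχK v' hv'L
    have hjw1 : j w.1 = 0 := by
      have h1 : j w.1 ∈ N := hjN w.1
      have h3 : (inner ℝ (j w.1) (j w.1) : ℝ) = 0 :=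
        (Submodule.mem_orthogonal K _).mp h1 _ hjw1K
      exact inner_self_eq_zero.mp h3
    have hw1 : w.1 = 0 := by
      have hn := hjnorm w.1
      rw [hjw1, norm_zero] at hn
      exact norm_eq_zero.mp hn.symm
    have hw0 : w = 0 := by
      rw [Prod.ext_iff]
      exact ⟨hw1, hw2⟩
    rwa [hwdef, sub_eq_zero] at hw0
  refine ⟨V₁, V₂, φ₁, Tc.toLinearEquiv, U', Metric.isOpen_ball, hV₂open, hφ₁CD, ?_⟩
  have hfun : (fun y : EuclideanSpace ℝ (Fin (m - p)) × EuclideanSpace ℝ (Fin p) =>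
      ((φ₁ y.1 : H) + ((Tc.toLinearEquiv y.2 : L) : H))) = Φ := rfl
  rw [hfun]
  exact { isOpen_U := hU'open, h₀_mem_U := h₀U',
          isOpen_V := Metric.isOpen_ball.prod hV₂open,
          contDiffOn := hΦCD, image_eq := himage, injOn := hinjOn,
          exists_contInv := ⟨ψ', hψ'cont.continuousOn, hψ'Φ⟩,
          fderiv_injective := hfdinj }
end
end
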